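/- arXiv:2012.10353 — 2 statements merged into one kernel-verified Lean document; each statement's English description precedes it below -/
import Mathlib

section
/- Let a and b be coprime positive integers and let d ≥ 1 be an integer. Then in the ring ℤ[t,t⁻¹] of integer Laurent polynomials, the product (t^d − t^{−d})·(t^{(a+b)d} − t^{−(a+b)d}) divides (t − t^{−1})² · Σ_{k∣d} μ(k)·(−1)^{(a+b+1)d/k} · [ (a+b)d/k choose ad/k ]_{t^k}. (Equivalently, the BPS generating function Ω_d(ℙ(1,a,b))(q) = ([1]_q²/([d]_q[(a+b)d]_q)) Σ_{k∣d} μ(k)(−1)^{(a+b+1)d/k} [ (a+b)d/k choose ad/k ]_{q^k} is an integer Laurent polynomial in q^{1/2} = t; this is Theorem 2.3 of the paper for the pair ℙ(1,a,b), using the closed form N^log_d(ℙ(1,a,b))(q) = [(a+b)d choose ad]_q of Proposition 3.1.) -/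
/-!
STATEMENT 0: BPS integrality for ℙ(1,a,b) (Theorem 2.3 of the paper).
In ℤ[t,t⁻¹], the product (t^d − t^{−d})·(t^{(a+b)d} − t^{−(a+b)d}) divides
(t − t^{−1})² · Σ_{k∣d} μ(k)·(−1)^{(a+b+1)d/k} · [ (a+b)d/k choose ad/k ]_{t^k}.
-/

open Finset LaurentPolynomial ArithmeticFunction

noncomputable section

/-- Gaussian binomial coefficient `C_q(n, m) ∈ ℤ[q]`, defined by the q-Pascal recursion
`C_q(n+1, m+1) = C_q(n, m) + q^{m+1}·C_q(n, m+1)`; it vanishes for `m > n`. -/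
def gaussBinom : ℕ → ℕ → Polynomial ℤ
  | _, 0 => 1
  | 0, _ + 1 => 0
  | n + 1, m + 1 => gaussBinom n m + Polynomial.X ^ (m + 1) * gaussBinom n (m + 1)

/-- The symmetrised q-integer `[n]_t = t^n − t^{−n}` in `ℤ[t,t⁻¹]`. -/
def qint (n : ℤ) : LaurentPolynomial ℤ := T n - T (-n)

/-- The symmetrised q-binomial with the substitution `t ↦ t^k`:
`[n choose m]_{t^k} = t^{−k·m·(n−m)} · C_{t^{2k}}(n, m)` in `ℤ[t,t⁻¹]`. -/
def symmBinom (k : ℤ) (n m : ℕ) : LaurentPolynomial ℤ :=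
  T (-(k * (m : ℤ) * ((n - m : ℕ) : ℤ))) * Polynomial.aeval (T (2 * k)) (gaussBinom n m)

namespace BPS

open Polynomial


lemma gauss_zero (n : ℕ) : gaussBinom n 0 = 1 := by cases n <;> rfl

lemma gauss_zero_succ (m : ℕ) : gaussBinom 0 (m+1) = 0 := rfl

lemma gauss_succ (n m : ℕ) :
    gaussBinom (n+1) (m+1) = gaussBinom n m + X ^ (m + 1) * gaussBinom n (m + 1) := rfl

lemma gauss_eq_zero_of_lt : ∀ {n m : ℕ}, n < m → gaussBinom n m = 0 := by
  intro n
  induction n with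
  | zero => intro m hm; match m, hm with | m+1, _ => rfl
  | succ n ih =>
    intro m hm
    match m, hm with
    | m+1, hm =>
      rw [gauss_succ, ih (by omega), ih (by omega), mul_zero, add_zero]

/-- `F n = ∏_{i=1}^n (X^i - 1)`. -/
def Fq (n : ℕ) : Polynomial ℤ := ∏ i ∈ range n, (X ^ (i+1) - 1)

lemma Fq_zero : Fq 0 = 1 := by simp [Fq]

lemma Fq_succ (n : ℕ) : Fq (n+1) = Fq n * (X ^ (n+1) - 1) := by
  rw [Fq, prod_range_succ]; rfl

lemma X_pow_sub_one_ne_zero {n : ℕ} (hn : 0 < n) : (X ^ n - 1 : Polynomial ℤ) ≠ 0 := by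
  have h := monic_X_pow_sub_C (1 : ℤ) (by omega : n ≠ 0)
  rw [map_one] at h
  exact h.ne_zero

lemma Fq_ne_zero (n : ℕ) : Fq n ≠ 0 := by
  induction n with
  | zero => simp [Fq_zero]
  | succ n ih => rw [Fq_succ]; exact mul_ne_zero ih (X_pow_sub_one_ne_zero n.succ_pos)

lemma gauss_mul_F : ∀ n m : ℕ, m ≤ n → gaussBinom n m * Fq m * Fq (n - m) = Fq n := by
  intro n
  induction n with
  | zero => intro m hm; interval_cases m; simp [gauss_zero, Fq_zero]
  | succ n ih =>
    intro m hm
    match m with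
    | 0 => simp [gauss_zero, Fq_zero]
    | m+1 =>
      rw [gauss_succ, add_mul, add_mul]
      rcases Nat.lt_or_ge m n with h | h
      · -- m + 1 ≤ n
        have e1 : gaussBinom n m * Fq (m+1) * Fq (n + 1 - (m+1)) =
            Fq n * (X ^ (m+1) - 1) := by
          have hnm : n + 1 - (m + 1) = n - m := by omega
          rw [hnm, Fq_succ m]
          calc gaussBinom n m * (Fq m * (X ^ (m+1) - 1)) * Fq (n - m)
              = gaussBinom n m * Fq m * Fq (n - m) * (X ^ (m+1) - 1) := by ring
            _ = Fq n * (X ^ (m+1) - 1) := by rw [ih m (by omega)]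
        have e2 : X ^ (m+1) * gaussBinom n (m+1) * Fq (m+1) * Fq (n + 1 - (m+1)) =
            Fq n * (X ^ (m+1) * (X ^ (n - m) - 1)) := by
          have hnm : n + 1 - (m + 1) = (n - (m+1)) + 1 := by omega
          have hnm2 : n - (m+1) + 1 = n - m := by omega
          rw [hnm, Fq_succ (n - (m+1)), hnm2]
          calc X ^ (m+1) * gaussBinom n (m+1) * Fq (m+1) * (Fq (n - (m+1)) * (X ^ (n-m) - 1))
              = gaussBinom n (m+1) * Fq (m+1) * Fq (n - (m+1)) *
                  (X ^ (m+1) * (X ^ (n-m) - 1)) := by ring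
            _ = Fq n * (X ^ (m+1) * (X ^ (n - m) - 1)) := by rw [ih (m+1) (by omega)]
        rw [e1, e2, Fq_succ]
        have hx : X ^ (m+1) * X ^ (n - m) = (X : Polynomial ℤ) ^ (n+1) := by
          rw [← pow_add]; congr 1; omega
        linear_combination (Fq n) * hx
      · -- m = n
        have hmn : m = n := by omega
        subst hmn
        rw [gauss_eq_zero_of_lt (Nat.lt_succ_self m), mul_zero, zero_mul, zero_mul, add_zero]
        have h0 : m + 1 - (m+1) = 0 := by omega
        rw [h0, Fq_zero, mul_one, Fq_succ m]
        have hthis := ih m le_rfl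
        rw [Nat.sub_self, Fq_zero, mul_one] at hthis
        calc gaussBinom m m * (Fq m * (X ^ (m+1) - 1))
            = gaussBinom m m * Fq m * (X ^ (m+1) - 1) := by ring
          _ = Fq m * (X ^ (m+1) - 1) := by rw [hthis]



/-- Absorption identity: `(X^m - 1)·C(n,m) = (X^n - 1)·C(n-1,m-1)`. -/
lemma abs_identity (n m : ℕ) (h1 : 1 ≤ m) (hmn : m ≤ n) :
    (X ^ m - 1) * gaussBinom n m = (X ^ n - 1) * gaussBinom (n-1) (m-1) := by
  have hc : Fq (m-1) * Fq (n - m) ≠ 0 := mul_ne_zero (Fq_ne_zero _) (Fq_ne_zero _)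
  apply mul_right_cancel₀ hc
  have hFm : Fq m = Fq (m-1) * (X ^ m - 1) := by
    have : m = (m-1) + 1 := by omega
    rw [this, Fq_succ]; congr 1 <;> omega
  have hFn : Fq n = Fq (n-1) * (X ^ n - 1) := by
    have : n = (n-1) + 1 := by omega
    rw [this, Fq_succ]; congr 1 <;> omega
  have e1 : (X ^ m - 1) * gaussBinom n m * (Fq (m-1) * Fq (n - m)) = Fq n := by
    calc (X ^ m - 1) * gaussBinom n m * (Fq (m-1) * Fq (n - m))
        = gaussBinom n m * (Fq (m-1) * (X ^ m - 1)) * Fq (n - m) := by ring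
      _ = gaussBinom n m * Fq m * Fq (n - m) := by rw [← hFm]
      _ = Fq n := gauss_mul_F n m hmn
  have e2 : (X ^ n - 1) * gaussBinom (n-1) (m-1) * (Fq (m-1) * Fq (n - m)) = Fq n := by
    have hsub : (n-1) - (m-1) = n - m := by omega
    calc (X ^ n - 1) * gaussBinom (n-1) (m-1) * (Fq (m-1) * Fq (n - m))
        = gaussBinom (n-1) (m-1) * Fq (m-1) * Fq (n - m) * (X ^ n - 1) := by ring
      _ = gaussBinom (n-1) (m-1) * Fq (m-1) * Fq ((n-1) - (m-1)) * (X ^ n - 1) := by rw [hsub]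
      _ = Fq (n-1) * (X ^ n - 1) := by rw [gauss_mul_F (n-1) (m-1) (by omega)]
      _ = Fq n := hFn.symm
  rw [e1, e2]

/-- If `η` is a primitive `w`-th root of unity, `w ∣ n`, `w ∤ m`, `m ≤ n`,
then the Gaussian binomial `C(n,m)` vanishes at `η`. -/
lemma aeval_gauss_eq_zero {w n m : ℕ} {η : ℂ} (hη : IsPrimitiveRoot η w)
    (hn : w ∣ n) (hm : ¬ w ∣ m) (hmn : m ≤ n) :
    Polynomial.aeval η (gaussBinom n m) = 0 := by
  have h1 : 1 ≤ m := by
    rcases Nat.eq_zero_or_pos m with h | h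
    · exact absurd (h ▸ dvd_zero w) hm
    · exact h
  have h := congrArg (Polynomial.aeval η) (abs_identity n m h1 hmn)
  simp only [map_mul, map_sub, map_pow, aeval_X, map_one] at h
  have hn1 : (η : ℂ) ^ n = 1 := (hη.pow_eq_one_iff_dvd n).2 hn
  have hm1 : (η : ℂ) ^ m ≠ 1 := fun hh => hm ((hη.pow_eq_one_iff_dvd m).1 hh)
  rw [hn1, sub_self, zero_mul] at h
  rcases mul_eq_zero.1 h with h' | h'
  · exact absurd (sub_eq_zero.1 h') hm1
  · exact h'


/-- `Ep p n = ∏_{i=1}^{pn, p ∤ i} (X^i - 1)`. -/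
def Ep (p n : ℕ) : Polynomial ℤ :=
  ∏ i ∈ range (p*n), (if p ∣ (i+1) then 1 else X ^ (i+1) - 1)

/-- `Fp p n = ∏_{i=1}^{n} (X^{pi} - 1)`. -/
def Fp (p n : ℕ) : Polynomial ℤ := ∏ i ∈ range n, (X ^ (p*(i+1)) - 1)

lemma expand_Fq (p n : ℕ) : Polynomial.expand ℤ p (Fq n) = Fp p n := by
  rw [Fq, map_prod, Fp]
  refine prod_congr rfl fun i _ => ?_
  rw [map_sub, map_one, map_pow, expand_X, ← pow_mul, mul_comm]

lemma Fp_ne_zero {p : ℕ} (hp : 0 < p) (n : ℕ) : Fp p n ≠ 0 := by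
  rw [Fp]
  apply prod_ne_zero_iff.2
  intro i _
  exact X_pow_sub_one_ne_zero (by positivity)

lemma Fp_mul_Ep {p : ℕ} (hp : 0 < p) : ∀ n, Fp p n * Ep p n = Fq (p*n) := by
  obtain ⟨q, rfl⟩ : ∃ q, p = q + 1 := ⟨p - 1, by omega⟩
  set p := q + 1 with hpdef
  intro n
  induction n with
  | zero => simp [Fp, Ep, Fq]
  | succ n ih =>
    have hpn : p * (n+1) = p*n + p := by ring
    have hblock : ∀ (f : ℕ → Polynomial ℤ), ∏ i ∈ range (p*(n+1)), f i =
        (∏ i ∈ range (p*n), f i) * ∏ j ∈ range p, f (p*n + j) := by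
      intro f; rw [hpn, prod_range_add]
    have hEblock : ∏ j ∈ range p, (if p ∣ (p*n + j + 1) then 1 else
        (X : Polynomial ℤ) ^ (p*n + j + 1) - 1) =
        ∏ j ∈ range q, ((X : Polynomial ℤ) ^ (p*n + j + 1) - 1) := by
      rw [prod_range_succ]
      have hlast : p ∣ p*n + q + 1 := by
        have h9 : p*n + q + 1 = p*(n+1) := by ring
        rw [h9]; exact Dvd.intro _ rfl
      rw [if_pos hlast, mul_one]
      refine prod_congr rfl fun j hj => ?_
      rw [mem_range] at hj
      have hnd : ¬ p ∣ p*n + j + 1 := by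
        intro hdvd
        have h2 : p ∣ j + 1 := by
          have h3 : p*n + j + 1 = p*n + (j+1) := by omega
          rw [h3] at hdvd
          exact (Nat.dvd_add_right (dvd_mul_right p n)).1 hdvd
        have := Nat.le_of_dvd (by omega) h2
        omega
      rw [if_neg hnd]
    have hFblock : ∏ j ∈ range p, ((X:Polynomial ℤ) ^ (p*n + j + 1) - 1) =
        (∏ j ∈ range q, ((X:Polynomial ℤ) ^ (p*n + j + 1) - 1)) * (X ^ (p*(n+1)) - 1) := by
      rw [prod_range_succ, show p*n + q + 1 = p*(n+1) from by ring]
    rw [Fq, hblock, ← Fq, ← ih, Ep, hblock, ← Ep, hEblock, hFblock]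
    rw [Fp, prod_range_succ, ← Fp]
    ring

/-- Key identity: `C(p(M+B), pM) · Ep(M) · Ep(B) = (expand p C(M+B,M)) · Ep(M+B)`. -/
lemma key_identity {p : ℕ} (hp : 0 < p) (M B : ℕ) :
    gaussBinom (p*(M+B)) (p*M) * (Ep p M * Ep p B) =
      Polynomial.expand ℤ p (gaussBinom (M+B) M) * Ep p (M+B) := by
  apply mul_right_cancel₀ (mul_ne_zero (Fp_ne_zero hp M) (Fp_ne_zero hp B))
  have hsub1 : p*(M+B) - p*M = p*B := by rw [Nat.mul_add]; omega
  have hsub2 : (M+B) - M = B := by omega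
  have e1 : gaussBinom (p*(M+B)) (p*M) * (Ep p M * Ep p B) * (Fp p M * Fp p B) =
      Fq (p*(M+B)) := by
    calc gaussBinom (p*(M+B)) (p*M) * (Ep p M * Ep p B) * (Fp p M * Fp p B)
        = gaussBinom (p*(M+B)) (p*M) * (Fp p M * Ep p M) * (Fp p B * Ep p B) := by ring
      _ = gaussBinom (p*(M+B)) (p*M) * Fq (p*M) * Fq (p*B) := by
          rw [Fp_mul_Ep hp, Fp_mul_Ep hp]
      _ = gaussBinom (p*(M+B)) (p*M) * Fq (p*M) * Fq (p*(M+B) - p*M) := by rw [hsub1]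
      _ = Fq (p*(M+B)) := gauss_mul_F (p*(M+B)) (p*M)
            (Nat.mul_le_mul_left p (by omega))
  have e2 : Polynomial.expand ℤ p (gaussBinom (M+B) M) * Ep p (M+B) * (Fp p M * Fp p B) =
      Fq (p*(M+B)) := by
    calc Polynomial.expand ℤ p (gaussBinom (M+B) M) * Ep p (M+B) * (Fp p M * Fp p B)
        = Polynomial.expand ℤ p (gaussBinom (M+B) M) * Polynomial.expand ℤ p (Fq M) *
            Polynomial.expand ℤ p (Fq B) * Ep p (M+B) := by
          rw [expand_Fq, expand_Fq]; ring
      _ = Polynomial.expand ℤ p (gaussBinom (M+B) M * Fq M * Fq B) * Ep p (M+B) := by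
          rw [map_mul, map_mul]
      _ = Polynomial.expand ℤ p (Fq (M+B)) * Ep p (M+B) := by
          rw [show gaussBinom (M+B) M * Fq M * Fq B
              = gaussBinom (M+B) M * Fq M * Fq ((M+B)-M) by rw [hsub2],
            gauss_mul_F (M+B) M (by omega)]
      _ = Fp p (M+B) * Ep p (M+B) := by rw [expand_Fq]
      _ = Fq (p*(M+B)) := Fp_mul_Ep hp (M+B)
  rw [e1, e2]

/-- Splitting of `Ep` along `N = M + B`. -/
lemma Ep_add (p M B : ℕ) :
    Ep p (M + B) = Ep p M *
      ∏ i ∈ range (p*B), (if p ∣ (i+1) then 1 else X ^ (p*M + i + 1) - 1) := by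
  rw [Ep, show p*(M+B) = p*M + p*B by ring, prod_range_add, ← Ep]
  congr 1
  refine prod_congr rfl fun i _ => ?_
  have hiff : p ∣ (p*M + i + 1) ↔ p ∣ (i + 1) := by
    rw [show p*M + i + 1 = p*M + (i+1) by omega]
    exact Nat.dvd_add_right (dvd_mul_right p M)
  by_cases hc : p ∣ (i+1)
  · rw [if_pos hc, if_pos (hiff.2 hc)]
  · rw [if_neg hc, if_neg (fun hh => hc (hiff.1 hh))]


lemma cyclotomic_aeval_eq_zero {e : ℕ} (he : 0 < e) {z : ℂ} (hz : IsPrimitiveRoot z e) :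
    Polynomial.aeval z (Polynomial.cyclotomic e ℚ) = 0 := by
  rw [Polynomial.cyclotomic_eq_minpoly_rat hz he]
  exact minpoly.aeval ℚ z

lemma cyclotomic_dvd_of_aeval {e : ℕ} (he : 0 < e) {z : ℂ} (hz : IsPrimitiveRoot z e)
    {P : Polynomial ℚ} (h0 : Polynomial.aeval z P = 0) : Polynomial.cyclotomic e ℚ ∣ P := by
  rw [Polynomial.cyclotomic_eq_minpoly_rat hz he]
  exact minpoly.dvd ℚ z h0

lemma not_cyclotomic_dvd {e : ℕ} (he : 0 < e) {z : ℂ} (hz : IsPrimitiveRoot z e)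
    {P : Polynomial ℚ} (h0 : Polynomial.aeval z P ≠ 0) : ¬ Polynomial.cyclotomic e ℚ ∣ P := by
  rintro ⟨Q, rfl⟩
  exact h0 (by rw [map_mul, cyclotomic_aeval_eq_zero he hz, zero_mul])

lemma cyclotomic_prime_rat {e : ℕ} (he : 0 < e) : Prime (Polynomial.cyclotomic e ℚ) :=
  (Polynomial.cyclotomic.irreducible_rat he).prime

/-- If `P` and its derivative vanish at a primitive `e`-th root of unity then `Φ_e² ∣ P`. -/
lemma cyclotomic_sq_dvd {e : ℕ} (he : 0 < e) {z : ℂ} (hz : IsPrimitiveRoot z e)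
    {P : Polynomial ℚ} (h0 : Polynomial.aeval z P = 0)
    (h1 : Polynomial.aeval z (Polynomial.derivative P) = 0) :
    (Polynomial.cyclotomic e ℚ)^2 ∣ P := by
  obtain ⟨Q, hQ⟩ := cyclotomic_dvd_of_aeval he hz h0
  have hΦz := cyclotomic_aeval_eq_zero he hz
  have hΦ'z : Polynomial.aeval z (Polynomial.derivative (Polynomial.cyclotomic e ℚ)) ≠ 0 := by
    intro hc
    have hsep : (Polynomial.cyclotomic e ℚ).Separable :=
      (Polynomial.cyclotomic.irreducible_rat he).separable
    obtain ⟨u, v, huv⟩ := hsep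
    have h2 := congrArg (Polynomial.aeval z) huv
    rw [map_add, map_mul, map_mul, hΦz, hc, mul_zero, mul_zero, add_zero, map_one] at h2
    exact zero_ne_one h2
  have hder := congrArg (Polynomial.aeval z) (congrArg Polynomial.derivative hQ)
  rw [Polynomial.derivative_mul, map_add, map_mul, map_mul, hΦz, zero_mul, add_zero, h1] at hder
  have hQz : Polynomial.aeval z Q = 0 := by
    rcases mul_eq_zero.1 hder.symm with h | h
    · exact absurd h hΦ'z
    · exact h
  obtain ⟨R, hR⟩ := cyclotomic_dvd_of_aeval he hz hQz
  exact ⟨R, by rw [hQ, hR, pow_two, mul_assoc]⟩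

lemma neg_one_pow_eq_of_even_add {m n : ℕ} (h : Even (m + n)) : ((-1:ℂ))^m = (-1)^n := by
  have h3 : ((-1:ℂ))^m * (-1)^n = 1 := by rw [← pow_add]; exact h.neg_one_pow
  have h4 : ((-1:ℂ))^n * (-1)^n = 1 := by
    rw [← pow_add]; exact Even.neg_one_pow ⟨n, rfl⟩
  calc ((-1:ℂ))^m = (-1)^m * ((-1)^n * (-1)^n) := by rw [h4, mul_one]
    _ = ((-1)^m * (-1)^n) * (-1)^n := by ring
    _ = (-1)^n := by rw [h3, one_mul]

lemma even_succ_mul_succ {a b : ℕ} (hab : Nat.Coprime a b) : Even ((a+1)*(b+1)) := by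
  rcases Nat.even_or_odd a with ha | ha
  · rcases Nat.even_or_odd b with hb | hb
    · exfalso
      have h2 : 2 ∣ Nat.gcd a b := Nat.dvd_gcd ha.two_dvd hb.two_dvd
      rw [hab] at h2
      omega
    · exact (Odd.add_one hb).mul_left _
  · exact (Odd.add_one ha).mul_right _

/-- counting non-multiples of `p` among `1..n`. -/
lemma count_nondvd (p : ℕ) : ∀ n : ℕ, (∑ b ∈ range n, if p ∣ (b+1) then 0 else 1) = n - n / p := by
  have hdvd : ∀ n : ℕ, (∑ b ∈ range n, if p ∣ (b+1) then 1 else 0) = n / p := by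
    intro n
    induction n with
    | zero => simp
    | succ n ih => rw [sum_range_succ, ih, Nat.succ_div]
  intro n
  have h1 : (∑ b ∈ range n, if p ∣ (b+1) then 0 else 1)
      + (∑ b ∈ range n, if p ∣ (b+1) then 1 else 0) = n := by
    rw [← sum_add_distrib]
    have he : ∀ b ∈ range n, ((if p ∣ (b+1) then 0 else 1) + (if p ∣ (b+1) then 1 else 0)) = 1 := by
      intro b _; by_cases h : p ∣ (b+1) <;> simp [h]
    rw [sum_congr rfl he, sum_const, card_range, smul_eq_mul, mul_one]
  have h2 := hdvd n
  have h3 : n / p ≤ n := Nat.div_le_self n p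
  omega

/-- The key root-of-unity sum identity, in the "2·sum" form. -/
lemma KSI {w p B : ℕ} {η : ℂ} (hη : IsPrimitiveRoot η w) (hpw : p ∣ w) (hw : 1 < w)
    (hwB : w ∣ p*B) (hB : 0 < B) :
    2 * (∑ b ∈ range (p*B), (if p ∣ (b+1) then 0 else η^(b+1)) *
          ∏ i ∈ (range (p*B)).erase b, (if p ∣ (i+1) then 1 else η^(i+1) - 1))
      = ((p*B - B : ℕ) : ℂ) * ∏ i ∈ range (p*B), (if p ∣ (i+1) then 1 else η^(i+1) - 1) := by
  classical
  set n := p * B with hn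
  set u : ℕ → ℂ := fun i => if p ∣ (i+1) then 1 else η^(i+1) - 1 with hu
  set U : ℂ := ∏ i ∈ range n, u i with hU
  set g : ℕ → ℂ := fun b => (if p ∣ (b+1) then 0 else η^(b+1)) * ∏ i ∈ (range n).erase b, u i
    with hg
  have hp : 0 < p := by
    rcases Nat.eq_zero_or_pos p with h | h
    · exfalso; subst h; rw [Nat.zero_dvd] at hpw; omega
    · exact h
  have hn1 : 1 ≤ n := hn ▸ Nat.mul_pos hp hB
  have hpn : p ∣ n := Dvd.intro B rfl
  have hηn : η ^ n = 1 := (hη.pow_eq_one_iff_dvd n).2 hwB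
  have hηne : ∀ j : ℕ, ¬ p ∣ j → η ^ j ≠ 1 := by
    intro j hj h1
    exact hj (dvd_trans hpw ((hη.pow_eq_one_iff_dvd j).1 h1))
  -- drop the last term
  have hlast : g (n-1) = 0 := by
    have hip : p ∣ (n-1)+1 := by rw [show (n-1)+1 = n by omega]; exact hpn
    simp only [hg, if_pos hip, zero_mul]
  have hsum1 : ∑ b ∈ range n, g b = ∑ b ∈ range (n-1), g b := by
    rw [show n = (n-1)+1 by omega, sum_range_succ, show (n-1)+1-1 = n-1 by omega, hlast, add_zero]
  -- reflection
  have hrefl : ∑ b ∈ range (n-1), g b = ∑ b ∈ range (n-1), g ((n-1) - 1 - b) :=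
    (sum_range_reflect g (n-1)).symm
  have hpair : ∀ b ∈ range (n-1), g b + g ((n-1) - 1 - b) =
      (if p ∣ (b+1) then 0 else 1) * U := by
    intro b hb
    rw [mem_range] at hb
    by_cases hc : p ∣ (b+1)
    · have hc2 : p ∣ ((n-1)-1-b)+1 := by
        have h9 : ((n-1)-1-b)+1 = n - (b+1) := by omega
        rw [h9]; exact Nat.dvd_sub hpn hc
      simp only [hg, if_pos hc, if_pos hc2, zero_mul, add_zero]
    · have hbn : ¬ p ∣ (n - 1 - b) := by
        intro hcc
        exact hc (by
          have h9 : b + 1 = n - (n-1-b) := by omega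
          rw [h9]; exact Nat.dvd_sub hpn hcc)
      have hc2 : ¬ p ∣ ((n-1)-1-b)+1 := by
        rw [show ((n-1)-1-b)+1 = n-1-b by omega]; exact hbn
      set x := η ^ (b+1) with hx
      set y := η ^ (n-1-b) with hy
      have hxy : x * y = 1 := by
        rw [hx, hy, ← pow_add, show (b+1) + (n-1-b) = n by omega]; exact hηn
      have hxne : x ≠ 1 := hηne _ hc
      have hyne : y ≠ 1 := hηne _ hbn
      have hub : u b = x - 1 := by rw [hu]; simp only [if_neg hc]; rfl
      have hub2 : u ((n-1)-1-b) = y - 1 := by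
        rw [hu]; simp only [if_neg hc2]
        rw [show ((n-1)-1-b)+1 = n-1-b by omega]
      have hmem : b ∈ range n := by rw [mem_range]; omega
      have hmem2 : (n-1)-1-b ∈ range n := by rw [mem_range]; omega
      have hprod1 : (∏ i ∈ (range n).erase b, u i) * (x - 1) = U := by
        rw [← hub]; exact prod_erase_mul (range n) u hmem
      have hprod2 : (∏ i ∈ (range n).erase ((n-1)-1-b), u i) * (y - 1) = U := by
        rw [← hub2]; exact prod_erase_mul (range n) u hmem2
      rw [hg]
      simp only [if_neg hc, if_neg hc2, one_mul]
      rw [show ((n-1)-1-b)+1 = n-1-b by omega, ← hx, ← hy]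
      -- goal : x * ∏erase b + y * ∏erase b' = U
      have hx1 : x - 1 ≠ 0 := sub_ne_zero.2 hxne
      have hy1 : y - 1 ≠ 0 := sub_ne_zero.2 hyne
      have hP1 : (∏ i ∈ (range n).erase b, u i) = U / (x-1) := by
        rw [eq_div_iff hx1]; exact hprod1
      have hP2 : (∏ i ∈ (range n).erase ((n-1)-1-b), u i) = U / (y-1) := by
        rw [eq_div_iff hy1]; exact hprod2
      rw [hP1, hP2]
      field_simp
      linear_combination U * hxy
  have h2S : 2 * (∑ b ∈ range n, g b) = ∑ b ∈ range (n-1), ((if p ∣ (b+1) then 0 else 1) * U) := by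
    rw [hsum1, two_mul]
    nth_rewrite 2 [hrefl]
    rw [← sum_add_distrib]
    exact sum_congr rfl hpair
  rw [h2S, ← sum_mul]
  congr 1
  have hcount := count_nondvd p (n-1)
  have hc2 : (∑ b ∈ range (n-1), if p ∣ (b+1) then (0:ℂ) else 1) =
      (((n-1) - (n-1)/p : ℕ) : ℂ) := by
    rw [← hcount, Nat.cast_sum]
    refine sum_congr rfl fun b _ => ?_
    by_cases h : p ∣ (b+1) <;> simp [h]
  rw [hc2]
  congr 1
  -- (n-1) - (n-1)/p = p*B - B
  obtain ⟨B', rfl⟩ : ∃ B', B = B'+1 := ⟨B-1, by omega⟩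
  have hnval : n = p*B' + p := by rw [hn, Nat.mul_succ]
  have hdiv : (n-1)/p = B' := by
    rw [show n - 1 = (p-1) + p*B' by omega, Nat.add_mul_div_left _ _ hp,
      Nat.div_eq_of_lt (by omega), zero_add]
  rw [hdiv, hn, Nat.mul_succ]
  omega


/-- exponent of the monomial prefactor. -/
def bexp (a b d k : ℕ) : ℕ := a*b*(d/k)^2*(k*(k-1)/2)

/-- the `k`-th term of the regularised sum, as an integer polynomial. -/
def bterm (a b d k : ℕ) : Polynomial ℤ :=
  Polynomial.C ((moebius k : ℤ) * (-1)^((a+b+1)*(d/k))) * X^(bexp a b d k) *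
    Polynomial.expand ℤ k (gaussBinom ((a+b)*(d/k)) (a*(d/k)))

/-- the regularised sum. -/
def Sq (a b d : ℕ) : Polynomial ℤ := ∑ k ∈ d.divisors, bterm a b d k

lemma prim_pow {e k : ℕ} (he : 0 < e) (hk : 0 < k) {z : ℂ} (hz : IsPrimitiveRoot z e) :
    IsPrimitiveRoot (z^k) (e / e.gcd k) := by
  have hg : 0 < e.gcd k := Nat.gcd_pos_of_pos_left k he
  have h1 : e = e.gcd k * (e / e.gcd k) := (Nat.mul_div_cancel' (Nat.gcd_dvd_left e k)).symm
  have hzg : IsPrimitiveRoot (z ^ (e.gcd k)) (e / e.gcd k) := hz.pow he h1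
  have h2 : z ^ k = (z ^ (e.gcd k)) ^ (k / e.gcd k) := by
    rw [← pow_mul, Nat.mul_div_cancel' (Nat.gcd_dvd_right e k)]
  rw [h2]
  exact hzg.pow_of_coprime _ (Nat.Coprime.symm (Nat.coprime_div_gcd_div_gcd hg))

lemma div_div_dvd {e k t : ℕ} (hk : 0 < k) (h : e ∣ t * k) : e / e.gcd k ∣ t := by
  have hg : 0 < e.gcd k := Nat.gcd_pos_of_pos_right e hk
  have hge : e.gcd k ∣ e := Nat.gcd_dvd_left e k
  have hgk : e.gcd k ∣ k := Nat.gcd_dvd_right e k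
  have hco : Nat.Coprime (e / e.gcd k) (k / e.gcd k) := Nat.coprime_div_gcd_div_gcd hg
  have h1 : e / e.gcd k * e.gcd k ∣ t * (k / e.gcd k) * e.gcd k := by
    rw [Nat.div_mul_cancel hge, mul_assoc, Nat.div_mul_cancel hgk]; exact h
  have h2 : e / e.gcd k ∣ t * (k / e.gcd k) := (Nat.mul_dvd_mul_iff_right hg).1 h1
  exact hco.dvd_of_dvd_mul_right h2

lemma sum_divisors_pair {M : Type*} [AddCommMonoid M] (f : ℕ → M) {d p : ℕ} (hd : 0 < d)
    (hp : p.Prime) (hpd : p ∣ d) :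
    ∑ k ∈ d.divisors, f k =
      (∑ k ∈ d.divisors.filter (fun k => ¬ p ∣ k), (f k + f (p*k)))
      + ∑ k ∈ d.divisors.filter (fun k => p*p ∣ k), f k := by
  classical
  have hp0 : p ≠ 0 := hp.ne_zero
  have hsplit := Finset.sum_filter_add_sum_filter_not d.divisors (fun k => p ∣ k) f
  have hsplit2 := Finset.sum_filter_add_sum_filter_not
    (d.divisors.filter (fun k => p ∣ k)) (fun k => p*p ∣ k) f
  have hff : (d.divisors.filter (fun k => p ∣ k)).filter (fun k => p*p ∣ k)
      = d.divisors.filter (fun k => p*p ∣ k) := by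
    rw [Finset.filter_filter]
    apply Finset.filter_congr
    intro k _
    constructor
    · rintro ⟨_, h2⟩; exact h2
    · intro h2; exact ⟨dvd_trans (dvd_mul_left p p) h2, h2⟩
  have hbij : ∑ k ∈ (d.divisors.filter (fun k => p ∣ k)).filter (fun k => ¬ p*p ∣ k), f k
      = ∑ k ∈ d.divisors.filter (fun k => ¬ p ∣ k), f (p*k) := by
    apply Finset.sum_nbij' (i := fun k => k / p) (j := fun k => p * k)
    · intro k hk
      simp only [Finset.mem_filter, Nat.mem_divisors] at hk ⊢
      obtain ⟨⟨⟨hkd, hd0⟩, hpk⟩, hppk⟩ := hk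
      refine ⟨⟨dvd_trans (Nat.div_dvd_of_dvd hpk) hkd, hd0⟩, ?_⟩
      intro hcon
      apply hppk
      obtain ⟨c, hc⟩ := hcon
      have hk2 : k = p * (k / p) := (Nat.mul_div_cancel' hpk).symm
      exact ⟨c, by rw [hk2, hc]; ring⟩
    · intro k hk
      simp only [Finset.mem_filter, Nat.mem_divisors] at hk ⊢
      obtain ⟨⟨hkd, hd0⟩, hpk⟩ := hk
      have hcop : Nat.Coprime p k := (Nat.Prime.coprime_iff_not_dvd hp).2 hpk
      refine ⟨⟨⟨Nat.Coprime.mul_dvd_of_dvd_of_dvd hcop hpd hkd, hd0⟩, dvd_mul_right p k⟩, ?_⟩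
      intro hcon
      exact hpk ((mul_dvd_mul_iff_left (a := p) (by exact_mod_cast hp0)).1 hcon)
    · intro k hk
      simp only [Finset.mem_filter, Nat.mem_divisors] at hk
      exact Nat.mul_div_cancel' hk.1.2
    · intro k _
      exact Nat.mul_div_cancel_left k hp.pos
    · intro k hk
      simp only [Finset.mem_filter, Nat.mem_divisors] at hk
      rw [Nat.mul_div_cancel' hk.1.2]
  rw [← hsplit, ← hsplit2, hff, hbij, Finset.sum_add_distrib]
  abel

lemma dk_pos {d k : ℕ} (hd : 0 < d) (hk : k ∣ d) : 0 < d / k :=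
  Nat.div_pos (Nat.le_of_dvd hd hk) (Nat.pos_of_dvd_of_pos hk hd)

/-- Case A : for `e ∤ d` (but `e ∣ (a+b)d`), `Φ_e` divides every term. -/
lemma caseA (a b d e : ℕ) (ha : 0 < a) (hb : 0 < b) (hab : Nat.Coprime a b) (hd : 0 < d)
    (he2 : 2 ≤ e) (hend : e ∣ (a+b)*d) (hed : ¬ e ∣ d) :
    Polynomial.cyclotomic e ℚ ∣ (Sq a b d).map (algebraMap ℤ ℚ) := by
  have he : 0 < e := by omega
  obtain ⟨z, hz⟩ : ∃ z : ℂ, IsPrimitiveRoot z e := ⟨_, Complex.isPrimitiveRoot_exp e (by omega)⟩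
  apply cyclotomic_dvd_of_aeval he hz
  rw [Sq, Polynomial.map_sum, map_sum]
  apply Finset.sum_eq_zero
  intro k hk
  rw [Nat.mem_divisors] at hk
  have hk0 : 0 < k := Nat.pos_of_dvd_of_pos hk.1 hd
  set w := e / e.gcd k with hw
  have hprim : IsPrimitiveRoot (z^k) w := prim_pow he hk0 hz
  have hdk : d / k * k = d := Nat.div_mul_cancel hk.1
  have hwN : w ∣ (a+b)*(d/k) := by
    apply div_div_dvd hk0
    rw [mul_assoc, hdk]; exact hend
  have hwM : ¬ w ∣ a*(d/k) := by
    intro hcon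
    have hsub : (a+b)*(d/k) - a*(d/k) = b*(d/k) := by
      rw [← Nat.sub_mul]; congr 1; omega
    have hwb : w ∣ b*(d/k) := hsub ▸ Nat.dvd_sub hwN hcon
    have hwg : w ∣ d/k := by
      have := Nat.dvd_gcd hcon hwb
      rwa [Nat.gcd_mul_right, hab, one_mul] at this
    apply hed
    have h1 : e.gcd k * w ∣ k * (d/k) := mul_dvd_mul (Nat.gcd_dvd_right e k) hwg
    rwa [Nat.mul_div_cancel' (Nat.gcd_dvd_left e k), mul_comm k, hdk] at h1
  have hgz : Polynomial.aeval z
      ((Polynomial.expand ℤ k (gaussBinom ((a+b)*(d/k)) (a*(d/k)))).map (algebraMap ℤ ℚ)) = 0 := by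
    rw [Polynomial.aeval_map_algebraMap, Polynomial.expand_aeval]
    exact aeval_gauss_eq_zero hprim hwN hwM (Nat.mul_le_mul_right _ (by omega))
  rw [bterm, Polynomial.map_mul, map_mul, hgz, mul_zero]


lemma cast_pow_pred (m : ℕ) (z : ℂ) : (m:ℂ) * z^(m-1) * z = (m:ℂ) * z^m := by
  cases m with
  | zero => simp
  | succ m => rw [Nat.succ_sub_one, mul_assoc, ← pow_succ]

lemma evenk (x : ℕ) : 2 ∣ x*(x-1) := by
  cases x with
  | zero => simp
  | succ y =>
    rw [Nat.succ_sub_one, mul_comm]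
    exact (Nat.even_mul_succ_self y).two_dvd

lemma even_ab_helper {a b : ℕ} (hab : Nat.Coprime a b) : Even (a*b + (a+b+1)) := by
  rcases Nat.even_or_odd a with ha | ha
  · have hb : Odd b := by
      rcases Nat.even_or_odd b with hb | hb
      · exfalso
        have h2 := Nat.dvd_gcd ha.two_dvd hb.two_dvd
        rw [hab] at h2; omega
      · exact hb
    exact (ha.mul_right b).add ((ha.add_odd hb).add_one)
  · rcases Nat.even_or_odd b with hb | hb
    · exact (hb.mul_left a).add ((ha.add_even hb).add_one)
    · exact (ha.mul hb).add_odd ((ha.add_odd hb).add_one)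

lemma sign_lemma {a b D₀ p w : ℕ} {η : ℂ} (hη : IsPrimitiveRoot η w) (hp : p.Prime)
    (hpw : p ∣ w) (hwpD : w ∣ p*D₀) (hab : Nat.Coprime a b) :
    η ^ (a*b*D₀^2*(p*(p-1)/2)) = (-1:ℂ) ^ ((a+b+1)*(p*D₀) + (a+b+1)*D₀) := by
  have hpD : η ^ (p*D₀) = 1 := (hη.pow_eq_one_iff_dvd _).2 hwpD
  rcases hp.eq_two_or_odd' with h2 | hodd
  · subst h2
    rw [show 2*(2-1)/2 = 1 by norm_num, mul_one]
    have hsq : η^D₀ * η^D₀ = 1 := by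
      rw [← pow_add, show D₀ + D₀ = 2*D₀ by ring]; exact hpD
    have hLHS : η ^ (a*b*D₀^2) = (η^D₀)^(a*b*D₀) := by
      rw [← pow_mul]; congr 1; ring
    rcases mul_self_eq_one_iff.1 hsq with h1 | h1
    · have hwD : w ∣ D₀ := (hη.pow_eq_one_iff_dvd D₀).1 h1
      obtain ⟨t, ht⟩ := dvd_trans hpw hwD
      rw [hLHS, h1, one_pow]
      rw [Even.neg_one_pow ⟨(a+b+1)*3*t, by subst ht; ring⟩]
    · rw [hLHS, h1]
      apply neg_one_pow_eq_of_even_add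
      obtain ⟨t, ht⟩ := even_ab_helper hab
      have key : a*b*D₀ + ((a+b+1)*(2*D₀) + (a+b+1)*D₀)
          = D₀*(a*b + (a+b+1)) + ((a+b+1)*D₀)*2 := by ring
      have h9 : D₀*(a*b + (a+b+1)) = D₀*(t+t) := by rw [ht]
      exact ⟨D₀*t + (a+b+1)*D₀, by rw [key, h9]; ring⟩
  · obtain ⟨r, hr⟩ := hodd
    subst hr
    have hhalf : (2*r+1)*((2*r+1)-1)/2 = (2*r+1)*r := by
      rw [show (2*r+1) - 1 = 2*r by omega, show (2*r+1)*(2*r) = ((2*r+1)*r)*2 by ring,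
        Nat.mul_div_cancel _ (by norm_num)]
    rw [hhalf]
    have hLHS : η ^ (a*b*D₀^2*((2*r+1)*r)) = (η^((2*r+1)*D₀))^(a*b*D₀*r) := by
      rw [← pow_mul]; congr 1; ring
    rw [hLHS, hpD, one_pow,
      Even.neg_one_pow ⟨(a+b+1)*D₀*(r+1), by ring⟩]

lemma aeval_derivative_prod_range (n : ℕ) (f : ℕ → Polynomial ℤ) (z : ℂ) :
    Polynomial.aeval z (Polynomial.derivative (∏ i ∈ range n, f i)) =
      ∑ b ∈ range n, (∏ i ∈ (range n).erase b, Polynomial.aeval z (f i)) *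
        Polynomial.aeval z (Polynomial.derivative (f b)) := by
  classical
  induction n with
  | zero => simp
  | succ n ih =>
    rw [prod_range_succ, Polynomial.derivative_mul, map_add, map_mul, map_mul, ih,
      sum_range_succ, sum_mul]
    have e1 : (range (n+1)).erase n = range n := by
      rw [range_add_one, Finset.erase_insert (by simp)]
    have e2 : ∀ b ∈ range n, (range (n+1)).erase b = insert n ((range n).erase b) := by
      intro b hb
      rw [mem_range] at hb
      rw [range_add_one, Finset.erase_insert_of_ne (by omega)]
    rw [e1]
    congr 1
    · refine sum_congr rfl fun b hb => ?_
      rw [e2 b hb, Finset.prod_insert (by simp [Finset.mem_erase])]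
      ring
    · rw [map_prod]

lemma aeval_expand_Ep (k p n : ℕ) (z : ℂ) :
    Polynomial.aeval z (Polynomial.expand ℤ k (Ep p n)) =
      ∏ i ∈ range (p*n), (if p ∣ (i+1) then (1:ℂ) else (z^k)^(i+1) - 1) := by
  rw [Polynomial.expand_aeval, Ep, map_prod]
  refine prod_congr rfl fun i _ => ?_
  by_cases h : p ∣ (i+1) <;> simp [h]

lemma Ep_val_ne_zero {w p : ℕ} {η : ℂ} (hη : IsPrimitiveRoot η w) (hpw : p ∣ w) (n : ℕ) :
    (∏ i ∈ range (p*n), (if p ∣ (i+1) then (1:ℂ) else η^(i+1) - 1)) ≠ 0 := by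
  apply prod_ne_zero_iff.2
  intro i _
  by_cases h : p ∣ (i+1)
  · simp [h]
  · rw [if_neg h]
    apply sub_ne_zero.2
    intro hcon
    exact h (dvd_trans hpw ((hη.pow_eq_one_iff_dvd _).1 hcon))

lemma bexp_step (a b d k p D₀ : ℕ) (hk : 1 ≤ k) (hp : 1 ≤ p)
    (hdk : d/k = p*D₀) (hdpk : d/(p*k) = D₀) :
    bexp a b d (p*k) = bexp a b d k + k*(a*b*D₀^2*(p*(p-1)/2)) := by
  apply Nat.eq_of_mul_eq_mul_left (show 0 < 2 by norm_num)
  rw [bexp, bexp, hdk, hdpk, Nat.mul_add]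
  have key2 : ∀ u x : ℕ, 2*(u*(x*(x-1)/2)) = u*(x*(x-1)) := by
    intro u x
    calc 2*(u*(x*(x-1)/2)) = u*(2*(x*(x-1)/2)) := by ring
      _ = u*(x*(x-1)) := by rw [Nat.mul_div_cancel' (evenk x)]
  have key3 : ∀ u x y : ℕ, 2*(y*(u*(x*(x-1)/2))) = y*(u*(x*(x-1))) := by
    intro u x y
    calc 2*(y*(u*(x*(x-1)/2))) = y*(2*(u*(x*(x-1)/2))) := by ring
      _ = y*(u*(x*(x-1))) := by rw [key2]
  rw [key2, key2, key3]
  have hpk1 : 1 ≤ p*k := Nat.one_le_iff_ne_zero.2 (by positivity)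
  zify [hk, hp, hpk1]
  ring


set_option maxHeartbeats 1000000 in
lemma pair_dvd (a b d e k p : ℕ) (ha : 0 < a) (hb : 0 < b) (hab : Nat.Coprime a b)
    (he2 : 2 ≤ e) (hed : e ∣ d) (hd : 0 < d) (hp : p.Prime) (hpe : p ∣ e)
    (hkd : k ∣ d) (hpk : ¬ p ∣ k) :
    (Polynomial.cyclotomic e ℚ)^2 ∣
      (bterm a b d k + bterm a b d (p*k)).map (algebraMap ℤ ℚ) := by
  classical
  have he : 0 < e := by omega
  have hk0 : 0 < k := Nat.pos_of_dvd_of_pos hkd hd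
  have hp0 : 0 < p := hp.pos
  have hpd : p ∣ d := hpe.trans hed
  have hcop : Nat.Coprime p k := (Nat.Prime.coprime_iff_not_dvd hp).2 hpk
  have hkpd : (k*p) ∣ d := Nat.Coprime.mul_dvd_of_dvd_of_dvd hcop.symm hkd hpd
  set D₀ := d/(k*p) with hD₀def
  have hd2 : k*p*D₀ = d := Nat.mul_div_cancel' hkpd
  have hD0pos : 0 < D₀ := Nat.div_pos (Nat.le_of_dvd hd hkpd) (by positivity)
  have hdk : d/k = p*D₀ := by
    rw [← hd2, mul_assoc, Nat.mul_div_cancel_left _ hk0]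
  have hdpk : d/(p*k) = D₀ := by
    rw [← hd2, show k*p*D₀ = p*k*D₀ by ring, Nat.mul_div_cancel_left _ (by positivity)]
  -- the root of unity
  obtain ⟨z, hz⟩ : ∃ z : ℂ, IsPrimitiveRoot z e := ⟨_, Complex.isPrimitiveRoot_exp e (by omega)⟩
  set w := e / e.gcd k with hwdef
  have hprim : IsPrimitiveRoot (z^k) w := prim_pow he hk0 hz
  have hpw : p ∣ w := by
    have hpg : ¬ p ∣ e.gcd k := fun h => hpk (h.trans (Nat.gcd_dvd_right e k))
    have h1 : e.gcd k * w = e := Nat.mul_div_cancel' (Nat.gcd_dvd_left e k)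
    rcases (Nat.Prime.dvd_mul hp).1 (h1 ▸ hpe) with h | h
    · exact absurd h hpg
    · exact h
  have hw0 : 0 < w := by
    apply Nat.div_pos (Nat.le_of_dvd he (Nat.gcd_dvd_left e k))
    exact Nat.gcd_pos_of_pos_left k he
  have hw1 : 1 < w := lt_of_lt_of_le hp.one_lt (Nat.le_of_dvd hw0 hpw)
  have hwdk : w ∣ p*D₀ := by
    rw [← hdk]
    apply div_div_dvd hk0
    rw [Nat.div_mul_cancel hkd]; exact hed
  have hηpM : (z^k)^(p*(a*D₀)) = 1 := by
    rw [(hprim.pow_eq_one_iff_dvd _), show p*(a*D₀) = a*(p*D₀) by ring]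
    exact Dvd.dvd.mul_left hwdk a
  have hwpB : w ∣ p*(b*D₀) := by
    rw [show p*(b*D₀) = b*(p*D₀) by ring]
    exact Dvd.dvd.mul_left hwdk b
  have hB'pos : 0 < b*D₀ := by positivity
  -- Möbius
  have hμ : (moebius (p*k) : ℤ) = - (moebius k : ℤ) := by
    rw [isMultiplicative_moebius.map_mul_of_coprime hcop, moebius_apply_prime hp]
    push_cast; ring
  -- polynomials
  set β₁ := bexp a b d k with hβ₁def
  set β₂ := bexp a b d (p*k) with hβ₂def
  set s1 : ℤ := (-1)^((a+b+1)*(p*D₀)) with hs1def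
  set s2 : ℤ := (-1)^((a+b+1)*D₀) with hs2def
  set G1 : Polynomial ℤ := gaussBinom (p*(a*D₀+b*D₀)) (p*(a*D₀)) with hG1def
  set G0 : Polynomial ℤ := gaussBinom (a*D₀+b*D₀) (a*D₀) with hG0def
  set A : Polynomial ℤ := Polynomial.expand ℤ k (Ep p (a*D₀)) with hAdef
  set Bb : Polynomial ℤ := Polynomial.expand ℤ k (Ep p (b*D₀)) with hBbdef
  set ESh : Polynomial ℤ :=
    ∏ i ∈ range (p*(b*D₀)), (if p ∣ (i+1) then 1 else X^(p*(a*D₀) + i + 1) - 1) with hEShdef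
  set S : Polynomial ℤ := Polynomial.expand ℤ k ESh with hSdef
  set Γ : Polynomial ℤ := Polynomial.C s1 * X^β₁ * S - Polynomial.C s2 * X^β₂ * Bb with hΓdef
  have ht1 : bterm a b d k = Polynomial.C (moebius k : ℤ)
      * (Polynomial.C s1 * X^β₁ * Polynomial.expand ℤ k G1) := by
    rw [bterm, hdk, show (a+b)*(p*D₀) = p*(a*D₀+b*D₀) by ring, show a*(p*D₀) = p*(a*D₀) by ring,
      Polynomial.C_mul]
    ring
  have ht2 : bterm a b d (p*k) = Polynomial.C (moebius k : ℤ)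
      * (-(Polynomial.C s2 * X^β₂ * Polynomial.expand ℤ (p*k) G0)) := by
    rw [bterm, hdpk, hμ, show (a+b)*D₀ = a*D₀+b*D₀ by ring, Polynomial.C_mul,
      Polynomial.C_neg]
    ring
  -- expanded key identity
  have hF12 : Polynomial.expand ℤ k G1 * (A * Bb) = Polynomial.expand ℤ (p*k) G0 * (A * S) := by
    have h := congrArg (Polynomial.expand ℤ k) (key_identity hp0 (a*D₀) (b*D₀))
    rw [map_mul, map_mul, map_mul, Polynomial.expand_expand, Ep_add p (a*D₀) (b*D₀), map_mul,
      show k*p = p*k from mul_comm k p] at h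
    linear_combination h
  have hfive : (bterm a b d k + bterm a b d (p*k)) * (A * Bb) =
      Polynomial.C (moebius k : ℤ) * (Polynomial.expand ℤ (p*k) G0 * (A * Γ)) := by
    rw [ht1, ht2, hΓdef]
    linear_combination (Polynomial.C (moebius k : ℤ) * (Polynomial.C s1 * X^β₁)) * hF12
  -- nonvanishing
  have hAval : Polynomial.aeval z A = ∏ i ∈ range (p*(a*D₀)),
      (if p ∣ (i+1) then (1:ℂ) else (z^k)^(i+1) - 1) := aeval_expand_Ep k p (a*D₀) z
  have hBval : Polynomial.aeval z Bb = ∏ i ∈ range (p*(b*D₀)),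
      (if p ∣ (i+1) then (1:ℂ) else (z^k)^(i+1) - 1) := aeval_expand_Ep k p (b*D₀) z
  have hABne : Polynomial.aeval z ((A * Bb).map (algebraMap ℤ ℚ)) ≠ 0 := by
    rw [Polynomial.aeval_map_algebraMap, map_mul, hAval, hBval]
    exact mul_ne_zero (Ep_val_ne_zero hprim hpw _) (Ep_val_ne_zero hprim hpw _)
  have hABnd : ¬ Polynomial.cyclotomic e ℚ ∣ (A * Bb).map (algebraMap ℤ ℚ) :=
    not_cyclotomic_dvd he hz hABne
  -- the analytic core
  have hΓdvd : (Polynomial.cyclotomic e ℚ)^2 ∣ Γ.map (algebraMap ℤ ℚ) := by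
    set u : ℕ → ℂ := fun i => if p ∣ (i+1) then 1 else (z^k)^(i+1) - 1 with hudef
    set U : ℂ := ∏ i ∈ range (p*(b*D₀)), u i with hUdef
    set fS : ℕ → Polynomial ℤ :=
      fun i => if p ∣ (i+1) then 1 else X^(k*(p*(a*D₀) + i + 1)) - 1 with hfSdef
    set fB : ℕ → Polynomial ℤ :=
      fun i => if p ∣ (i+1) then 1 else X^(k*(i+1)) - 1 with hfBdef
    have hSprod : S = ∏ i ∈ range (p*(b*D₀)), fS i := by
      rw [hSdef, hEShdef, map_prod]
      refine prod_congr rfl fun i _ => ?_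
      by_cases h : p ∣ (i+1)
      · simp [hfSdef, h]
      · simp only [hfSdef, if_neg h, map_sub, map_one, map_pow, Polynomial.expand_X, ← pow_mul]
    have hBprod : Bb = ∏ i ∈ range (p*(b*D₀)), fB i := by
      rw [hBbdef, Ep, map_prod]
      refine prod_congr rfl fun i _ => ?_
      by_cases h : p ∣ (i+1)
      · simp [hfBdef, h]
      · simp only [hfBdef, if_neg h, map_sub, map_one, map_pow, Polynomial.expand_X, ← pow_mul]
    have hufS : ∀ i : ℕ, Polynomial.aeval z (fS i) = u i := by
      intro i
      by_cases h : p ∣ (i+1)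
      · simp [hfSdef, hudef, h]
      · simp only [hfSdef, hudef, if_neg h, map_sub, map_one, map_pow, Polynomial.aeval_X]
        congr 1
        rw [pow_mul, show p*(a*D₀) + i + 1 = p*(a*D₀) + (i+1) by omega, pow_add, hηpM, one_mul]
    have hufB : ∀ i : ℕ, Polynomial.aeval z (fB i) = u i := by
      intro i
      by_cases h : p ∣ (i+1)
      · simp [hfBdef, hudef, h]
      · simp only [hfBdef, hudef, if_neg h, map_sub, map_one, map_pow, Polynomial.aeval_X]
        congr 1
        rw [pow_mul]
    have hSval : Polynomial.aeval z S = U := by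
      rw [hSprod, map_prod, hUdef]
      exact prod_congr rfl fun i _ => hufS i
    have hBBval : Polynomial.aeval z Bb = U := by
      rw [hBprod, map_prod, hUdef]
      exact prod_congr rfl fun i _ => hufB i
    -- the scalar relation
    have hβstep : β₂ = β₁ + k*(a*b*D₀^2*(p*(p-1)/2)) :=
      bexp_step a b d k p D₀ hk0 hp0 hdk hdpk
    have hSC : ((s1 : ℤ):ℂ) * z^β₁ = ((s2 : ℤ):ℂ) * z^β₂ := by
      have hsl := sign_lemma (a := a) (b := b) (D₀ := D₀) hprim hp hpw hwdk hab
      have hzk : z^β₂ = z^β₁ * (z^k)^(a*b*D₀^2*(p*(p-1)/2)) := by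
        rw [hβstep, pow_add, pow_mul]
      rw [hs1def, hs2def, hzk, hsl]
      push_cast
      have hone : ((-1:ℂ))^((a+b+1)*D₀) * (-1)^((a+b+1)*D₀) = 1 := by
        rw [← pow_add]; exact Even.neg_one_pow ⟨(a+b+1)*D₀, rfl⟩
      rw [pow_add]
      linear_combination (-((-1:ℂ)^((a+b+1)*(p*D₀)) * z^β₁)) * hone
    -- derivative values
    set DS : ℂ := ∑ bb ∈ range (p*(b*D₀)), (∏ i ∈ (range (p*(b*D₀))).erase bb, u i) *
      (if p ∣ (bb+1) then 0 else
        ((k*(p*(a*D₀)+bb+1) : ℕ):ℂ) * z^(k*(p*(a*D₀)+bb+1) - 1)) with hDSdef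
    set DB : ℂ := ∑ bb ∈ range (p*(b*D₀)), (∏ i ∈ (range (p*(b*D₀))).erase bb, u i) *
      (if p ∣ (bb+1) then 0 else ((k*(bb+1) : ℕ):ℂ) * z^(k*(bb+1) - 1)) with hDBdef
    set Sr : ℂ := ∑ bb ∈ range (p*(b*D₀)), (if p ∣ (bb+1) then 0 else (z^k)^(bb+1)) *
      ∏ i ∈ (range (p*(b*D₀))).erase bb, u i with hSrdef
    have hfSder : ∀ bb : ℕ, Polynomial.aeval z (Polynomial.derivative (fS bb)) =
        if p ∣ (bb+1) then 0 else
          ((k*(p*(a*D₀)+bb+1) : ℕ):ℂ) * z^(k*(p*(a*D₀)+bb+1) - 1) := by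
      intro bb
      by_cases h : p ∣ (bb+1)
      · simp [hfSdef, h]
      · simp only [hfSdef, if_neg h, Polynomial.derivative_sub, Polynomial.derivative_one,
          sub_zero, Polynomial.derivative_X_pow, map_mul, Polynomial.aeval_C, map_pow,
          Polynomial.aeval_X, eq_intCast, map_intCast]
        push_cast
        ring
    have hfBder : ∀ bb : ℕ, Polynomial.aeval z (Polynomial.derivative (fB bb)) =
        if p ∣ (bb+1) then 0 else ((k*(bb+1) : ℕ):ℂ) * z^(k*(bb+1) - 1) := by
      intro bb
      by_cases h : p ∣ (bb+1)
      · simp [hfBdef, h]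
      · simp only [hfBdef, if_neg h, Polynomial.derivative_sub, Polynomial.derivative_one,
          sub_zero, Polynomial.derivative_X_pow, map_mul, Polynomial.aeval_C, map_pow,
          Polynomial.aeval_X, eq_intCast, map_intCast]
        push_cast
        ring
    have hDSval : Polynomial.aeval z (Polynomial.derivative S) = DS := by
      rw [hSprod, aeval_derivative_prod_range, hDSdef]
      refine sum_congr rfl fun bb _ => ?_
      rw [hfSder bb]
      congr 1
      exact prod_congr rfl fun i _ => hufS i
    have hDBval : Polynomial.aeval z (Polynomial.derivative Bb) = DB := by
      rw [hBprod, aeval_derivative_prod_range, hDBdef]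
      refine sum_congr rfl fun bb _ => ?_
      rw [hfBder bb]
      congr 1
      exact prod_congr rfl fun i _ => hufB i
    have hDz : DS * z = DB * z + ((k*(p*(a*D₀)) : ℕ):ℂ) * Sr := by
      rw [hDSdef, hDBdef, hSrdef, sum_mul, sum_mul, mul_sum, ← sum_add_distrib]
      refine sum_congr rfl fun bb _ => ?_
      by_cases h : p ∣ (bb+1)
      · simp [h]
      · simp only [if_neg h]
        have q1 : ((k*(p*(a*D₀)+bb+1) : ℕ):ℂ) * z^(k*(p*(a*D₀)+bb+1) - 1) * z
            = ((k*(p*(a*D₀)+bb+1) : ℕ):ℂ) * (z^k)^(bb+1) := by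
          rw [cast_pow_pred, pow_mul, show p*(a*D₀)+bb+1 = p*(a*D₀)+(bb+1) by omega,
            pow_add, hηpM, one_mul]
        have q2 : ((k*(bb+1) : ℕ):ℂ) * z^(k*(bb+1) - 1) * z
            = ((k*(bb+1) : ℕ):ℂ) * (z^k)^(bb+1) := by
          rw [cast_pow_pred, pow_mul]
        have q3 : ((k*(p*(a*D₀)+bb+1) : ℕ):ℂ) = ((k*(bb+1) : ℕ):ℂ) + ((k*(p*(a*D₀)) : ℕ):ℂ) := by
          push_cast; ring
        linear_combination (∏ i ∈ (range (p*(b*D₀))).erase bb, u i) * q1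
          - (∏ i ∈ (range (p*(b*D₀))).erase bb, u i) * q2
          + ((z^k)^(bb+1) * (∏ i ∈ (range (p*(b*D₀))).erase bb, u i)) * q3
    have hKSIinst : 2 * Sr = ((p*(b*D₀) - b*D₀ : ℕ):ℂ) * U := by
      rw [hSrdef, hUdef]
      simp only [hudef]
      exact KSI hprim hpw hw1 hwpB hB'pos
    -- the ℕ-identity for exponents
    have hN : β₂*2 = β₁*2 + (k*(p*(a*D₀)))*(p*(b*D₀) - b*D₀) := by
      rw [hβstep]
      have hsub : p*(b*D₀) - b*D₀ = (p-1)*(b*D₀) := (Nat.sub_one_mul p (b*D₀)).symm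
      rw [hsub, Nat.add_mul]
      congr 1
      calc k*(a*b*D₀^2*(p*(p-1)/2))*2 = k*(a*b*D₀^2*(2*(p*(p-1)/2))) := by ring
        _ = k*(a*b*D₀^2*(p*(p-1))) := by rw [Nat.mul_div_cancel' (evenk p)]
        _ = k*(p*(a*D₀))*((p-1)*(b*D₀)) := by ring
    have hβ2C : ((β₂:ℕ):ℂ)*2 = ((β₁:ℕ):ℂ)*2
        + ((k*(p*(a*D₀)) : ℕ):ℂ) * ((p*(b*D₀) - b*D₀ : ℕ):ℂ) := by
      have hc := congrArg (fun m : ℕ => (m:ℂ)) hN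
      push_cast at hc ⊢
      linear_combination hc
    -- derivative of Γ
    have hΓder : Polynomial.derivative Γ =
        Polynomial.C s1 * (Polynomial.C (β₁:ℤ) * X^(β₁-1) * S + X^β₁ * Polynomial.derivative S)
        - Polynomial.C s2 * (Polynomial.C (β₂:ℤ) * X^(β₂-1) * Bb
            + X^β₂ * Polynomial.derivative Bb) := by
      rw [hΓdef]
      simp only [Polynomial.derivative_sub, Polynomial.derivative_mul, Polynomial.derivative_C,
        zero_mul, Polynomial.derivative_X_pow]
      ring
    have hg1 : Polynomial.aeval z Γ = 0 := by
      rw [hΓdef]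
      simp only [map_sub, map_mul, map_pow, Polynomial.aeval_C, Polynomial.aeval_X, hSval,
        hBBval, eq_intCast, map_intCast]
      linear_combination U * hSC
    have hexpr : Polynomial.aeval z (Polynomial.derivative Γ) =
        ((s1 : ℤ):ℂ) * (((β₁:ℕ):ℂ) * z^(β₁-1) * U + z^β₁ * DS)
        - ((s2 : ℤ):ℂ) * (((β₂:ℕ):ℂ) * z^(β₂-1) * U + z^β₂ * DB) := by
      rw [hΓder]
      simp only [map_sub, map_add, map_mul, map_pow, Polynomial.aeval_C, Polynomial.aeval_X,
        hSval, hBBval, hDSval, hDBval, eq_intCast, map_intCast]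
      push_cast
      ring
    have h2z : (2*z : ℂ) ≠ 0 :=
      mul_ne_zero two_ne_zero (hz.ne_zero (by omega))
    have hmain : (((s1 : ℤ):ℂ) * (((β₁:ℕ):ℂ) * z^(β₁-1) * U + z^β₁ * DS)
        - ((s2 : ℤ):ℂ) * (((β₂:ℕ):ℂ) * z^(β₂-1) * U + z^β₂ * DB)) * (2*z) = 0 := by
      have R1 := cast_pow_pred β₁ z
      have R2 := cast_pow_pred β₂ z
      linear_combination (2*((s1 : ℤ):ℂ)*U) * R1 - (2*((s2 : ℤ):ℂ)*U) * R2
        + (2*((s1 : ℤ):ℂ)*z^β₁) * hDz + (((s1 : ℤ):ℂ)*z^β₁*((k*(p*(a*D₀)) : ℕ):ℂ)) * hKSIinst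
        + (2*DB*z + 2*((β₂:ℕ):ℂ)*U) * hSC - (((s1 : ℤ):ℂ)*z^β₁*U) * hβ2C
    have hg2 : Polynomial.aeval z (Polynomial.derivative Γ) = 0 := by
      rw [hexpr]
      exact (mul_eq_zero.1 hmain).resolve_right h2z
    exact cyclotomic_sq_dvd he hz
      (by rw [Polynomial.aeval_map_algebraMap]; exact hg1)
      (by rw [Polynomial.derivative_map, Polynomial.aeval_map_algebraMap]; exact hg2)
  -- conclusion
  have hmap := congrArg (Polynomial.map (algebraMap ℤ ℚ)) hfive
  simp only [Polynomial.map_mul] at hmap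
  have hrhs : (Polynomial.cyclotomic e ℚ)^2 ∣
      (Polynomial.C (moebius k : ℤ)).map (algebraMap ℤ ℚ) *
        ((Polynomial.expand ℤ (p*k) G0).map (algebraMap ℤ ℚ) *
          ((A.map (algebraMap ℤ ℚ)) * Γ.map (algebraMap ℤ ℚ))) :=
    Dvd.dvd.mul_left (Dvd.dvd.mul_left (Dvd.dvd.mul_left hΓdvd _) _) _
  rw [← hmap] at hrhs
  have hABnd' : ¬ Polynomial.cyclotomic e ℚ ∣
      A.map (algebraMap ℤ ℚ) * Bb.map (algebraMap ℤ ℚ) := by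
    rw [← Polynomial.map_mul]; exact hABnd
  exact (cyclotomic_prime_rat he).pow_dvd_of_dvd_mul_right 2 hABnd' hrhs


lemma caseB (a b d e : ℕ) (ha : 0 < a) (hb : 0 < b) (hab : Nat.Coprime a b) (hd : 0 < d)
    (he2 : 2 ≤ e) (hed : e ∣ d) :
    (Polynomial.cyclotomic e ℚ)^2 ∣ (Sq a b d).map (algebraMap ℤ ℚ) := by
  classical
  set p := e.minFac with hpdef
  have hp : p.Prime := Nat.minFac_prime (by omega)
  have hpe : p ∣ e := Nat.minFac_dvd e
  have hpd : p ∣ d := hpe.trans hed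
  rw [Sq, sum_divisors_pair (bterm a b d) hd hp hpd, Polynomial.map_add]
  apply dvd_add
  · rw [Polynomial.map_sum]
    apply Finset.dvd_sum
    intro k hk
    rw [Finset.mem_filter, Nat.mem_divisors] at hk
    exact pair_dvd a b d e k p ha hb hab he2 hed hd hp hpe hk.1.1 hk.2
  · rw [Polynomial.map_sum]
    apply Finset.dvd_sum
    intro k hk
    rw [Finset.mem_filter] at hk
    have hμ0 : moebius k = 0 := by
      apply moebius_eq_zero_of_not_squarefree
      intro hsq
      have h1 := hsq p hk.2
      rw [Nat.isUnit_iff] at h1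
      exact (Nat.Prime.one_lt hp).ne' h1
    have hz : bterm a b d k = 0 := by
      rw [bterm, hμ0, zero_mul, Polynomial.C_0, zero_mul, zero_mul]
    rw [hz, Polynomial.map_zero]
    exact dvd_zero _

lemma main_rat (a b d : ℕ) (ha : 0 < a) (hb : 0 < b) (hab : Nat.Coprime a b) (hd : 0 < d) :
    ((X^d - 1) * (X^((a+b)*d) - 1) : Polynomial ℚ) ∣
      (X - 1)^2 * (Sq a b d).map (algebraMap ℤ ℚ) := by
  classical
  have hnd : 0 < (a+b)*d := by positivity
  have hfac : ((X^d - 1) * (X^((a+b)*d) - 1) : Polynomial ℚ)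
      = ∏ e ∈ ((a+b)*d).divisors, Polynomial.cyclotomic e ℚ ^ (if e ∣ d then 2 else 1) := by
    have h1 : ∏ e ∈ ((a+b)*d).divisors, Polynomial.cyclotomic e ℚ = X^((a+b)*d) - 1 :=
      Polynomial.prod_cyclotomic_eq_X_pow_sub_one hnd ℚ
    have h2 : ∏ e ∈ d.divisors, Polynomial.cyclotomic e ℚ = X^d - 1 :=
      Polynomial.prod_cyclotomic_eq_X_pow_sub_one hd ℚ
    have h3 : ∀ e ∈ ((a+b)*d).divisors,
        Polynomial.cyclotomic e ℚ ^ (if e ∣ d then 2 else 1)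
        = Polynomial.cyclotomic e ℚ * (if e ∣ d then Polynomial.cyclotomic e ℚ else 1) := by
      intro e _
      by_cases h : e ∣ d
      · rw [if_pos h, if_pos h, pow_two]
      · rw [if_neg h, if_neg h, pow_one, mul_one]
    rw [prod_congr rfl h3, prod_mul_distrib, h1, ← prod_filter,
      Nat.divisors_filter_dvd_of_dvd (by positivity) (dvd_mul_left d (a+b)), h2]
    ring
  rw [hfac]
  apply Finset.prod_dvd_of_coprime
  · intro e he f hf hef
    exact IsCoprime.pow (Polynomial.cyclotomic.isCoprime_rat hef)
  · intro e he
    rw [Nat.mem_divisors] at he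
    have he0 : 0 < e := by
      rcases Nat.eq_zero_or_pos e with h | h
      · exfalso; subst h; rw [Nat.zero_dvd] at he; omega
      · exact h
    by_cases hed : e ∣ d
    · rw [if_pos hed]
      rcases Nat.lt_or_ge e 2 with h1 | h2
      · have he1 : e = 1 := by omega
        subst he1
        rw [Polynomial.cyclotomic_one]
        exact Dvd.dvd.mul_right dvd_rfl _
      · exact Dvd.dvd.mul_left (caseB a b d e ha hb hab hd h2 hed) _
    · rw [if_neg hed, pow_one]
      have h2 : 2 ≤ e := by
        rcases Nat.lt_or_ge e 2 with h1 | h2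
        · exfalso
          have he1 : e = 1 := by omega
          exact hed (he1 ▸ one_dvd d)
        · exact h2
      exact Dvd.dvd.mul_left (caseA a b d e ha hb hab hd h2 he.1 hed) _

lemma main_int (a b d : ℕ) (ha : 0 < a) (hb : 0 < b) (hab : Nat.Coprime a b) (hd : 0 < d) :
    ((X^d - 1) * (X^((a+b)*d) - 1) : Polynomial ℤ) ∣ (X - 1)^2 * Sq a b d := by
  have hm1 : ((X:Polynomial ℤ)^d - 1).Monic := by
    have h := Polynomial.monic_X_pow_sub_C (1:ℤ) (show d ≠ 0 by omega)
    rwa [map_one] at h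
  have hm2 : ((X:Polynomial ℤ)^((a+b)*d) - 1).Monic := by
    have h := Polynomial.monic_X_pow_sub_C (1:ℤ) (show (a+b)*d ≠ 0 by positivity)
    rwa [map_one] at h
  have hmonic := hm1.mul hm2
  have hinj : Function.Injective (algebraMap ℤ ℚ) := fun x y h => by exact_mod_cast h
  rw [← Polynomial.map_dvd_map (algebraMap ℤ ℚ) hinj hmonic]
  simp only [Polynomial.map_mul, Polynomial.map_sub, Polynomial.map_pow, Polynomial.map_X,
    Polynomial.map_one]
  exact main_rat a b d ha hb hab hd


lemma qint_eq (n : ℕ) : qint (n:ℤ) = T (-(n:ℤ)) *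
    Polynomial.aeval (T 2 : LaurentPolynomial ℤ) ((X:Polynomial ℤ)^n - 1) := by
  rw [map_sub, map_one, map_pow, Polynomial.aeval_X, T_pow, mul_sub, mul_one, ← T_add,
    show -(n:ℤ) + (n:ℤ)*2 = (n:ℤ) by ring, qint]

lemma term_eq (a b d k : ℕ) (hk : k ∣ d) (hk0 : 0 < k) :
    T (((a*b*d^2 : ℕ)):ℤ) * (((moebius k : ℤ) : LaurentPolynomial ℤ) *
        (-1)^((a+b+1)*(d/k)) * symmBinom (k:ℤ) ((a+b)*(d/k)) (a*(d/k)))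
      = Polynomial.aeval (T 2 : LaurentPolynomial ℤ) (bterm a b d k) := by
  obtain ⟨m, rfl⟩ := hk
  have hm : (k*m)/k = m := Nat.mul_div_cancel_left m hk0
  have hNM : ((a+b)*m - a*m : ℕ) = b*m := by rw [← Nat.sub_mul]; congr 1; omega
  have hexp : a*b*(k*m)^2 = 2*(bexp a b (k*m) k) + k*(a*m)*(b*m) := by
    rw [bexp, hm]
    have h2 : 2*(a*b*m^2*(k*(k-1)/2)) = a*b*m^2*(k*(k-1)) := by
      calc 2*(a*b*m^2*(k*(k-1)/2)) = a*b*m^2*(2*(k*(k-1)/2)) := by ring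
        _ = a*b*m^2*(k*(k-1)) := by rw [Nat.mul_div_cancel' (evenk k)]
    rw [h2]
    zify [show 1 ≤ k from hk0]
    ring
  have hTT : (T ((a*b*(k*m)^2 :ℕ):ℤ) : LaurentPolynomial ℤ)
      * T (-((k:ℤ) * ((a*m :ℕ):ℤ) * ((b*m :ℕ):ℤ)))
      = T ((2*(bexp a b (k*m) k) : ℕ):ℤ) := by
    rw [← T_add]
    congr 1
    have hc := congrArg (fun x:ℕ => (x:ℤ)) hexp
    push_cast at hc ⊢
    linarith
  have hee : ((bexp a b (k*m) k : ℕ):ℤ) * 2 = ((2*(bexp a b (k*m) k) : ℕ):ℤ) := by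
    push_cast; ring
  have hcast : ((moebius k * (-1)^((a+b+1)*m) : ℤ) : LaurentPolynomial ℤ)
      = ((moebius k : ℤ) : LaurentPolynomial ℤ) * (-1)^((a+b+1)*m) := by
    push_cast; ring
  rw [symmBinom, bterm, hm, hNM]
  rw [map_mul, map_mul, Polynomial.aeval_C, eq_intCast, map_pow, Polynomial.aeval_X,
    Polynomial.expand_aeval, T_pow, T_pow, hcast, hee, ← hTT,
    show ((k:ℤ))*2 = 2*(k:ℤ) by ring]
  ring

theorem bps_main (a b d : ℕ) (ha : 0 < a) (hb : 0 < b)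
    (hab : Nat.Coprime a b) (hd : 1 ≤ d) :
    qint (d : ℤ) * qint (((a + b) * d : ℕ) : ℤ) ∣
      qint 1 ^ 2 *
        ∑ k ∈ d.divisors,
          ((moebius k : ℤ) : LaurentPolynomial ℤ) *
            (-1) ^ ((a + b + 1) * (d / k)) *
            symmBinom (k : ℤ) ((a + b) * (d / k)) (a * (d / k)) := by
  classical
  have hd0 : 0 < d := hd
  obtain ⟨R, hR⟩ := main_int a b d ha hb hab hd0
  have hS : T (((a*b*d^2 : ℕ)):ℤ) *
      (∑ k ∈ d.divisors, ((moebius k : ℤ) : LaurentPolynomial ℤ) *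
        (-1) ^ ((a + b + 1) * (d / k)) *
        symmBinom (k : ℤ) ((a + b) * (d / k)) (a * (d / k)))
      = Polynomial.aeval (T 2 : LaurentPolynomial ℤ) (Sq a b d) := by
    rw [Sq, map_sum, mul_sum]
    refine sum_congr rfl fun k hk => ?_
    exact term_eq a b d k (Nat.mem_divisors.1 hk).1 (Nat.pos_of_mem_divisors hk)
  have hq1 : qint (d:ℤ) * qint (((a+b)*d : ℕ):ℤ) = T (-((d:ℤ) + (((a+b)*d : ℕ):ℤ))) *
      Polynomial.aeval (T 2 : LaurentPolynomial ℤ)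
        (((X:Polynomial ℤ)^d - 1) * (X^((a+b)*d) - 1)) := by
    rw [qint_eq d, qint_eq ((a+b)*d), map_mul,
      show -((d:ℤ) + (((a+b)*d : ℕ):ℤ)) = -(d:ℤ) + -(((a+b)*d : ℕ):ℤ) by ring, T_add]
    ring
  have hq2 : qint 1 ^ 2 = T (-2) *
      Polynomial.aeval (T 2 : LaurentPolynomial ℤ) (((X:Polynomial ℤ) - 1)^2) := by
    have h1 := qint_eq 1
    rw [pow_one] at h1
    push_cast at h1
    rw [h1, mul_pow, T_pow, map_pow]
    norm_num
  refine ⟨T ((d:ℤ) + (((a+b)*d : ℕ):ℤ) - 2 - ((a*b*d^2 : ℕ):ℤ)) *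
    Polynomial.aeval (T 2 : LaurentPolynomial ℤ) R, ?_⟩
  apply mul_left_cancel₀ (show (T (((a*b*d^2 : ℕ)):ℤ) : LaurentPolynomial ℤ) ≠ 0 from
    (isUnit_T _).ne_zero)
  have hT3 : (T (((a*b*d^2 : ℕ)):ℤ) : LaurentPolynomial ℤ)
      * T (-((d:ℤ) + (((a+b)*d : ℕ):ℤ)))
      * T ((d:ℤ) + (((a+b)*d : ℕ):ℤ) - 2 - ((a*b*d^2 : ℕ):ℤ)) = T (-2) := by
    rw [← T_add, ← T_add]
    congr 1
    ring
  calc T (((a*b*d^2 : ℕ)):ℤ) * (qint 1 ^ 2 * ∑ k ∈ d.divisors,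
        ((moebius k : ℤ) : LaurentPolynomial ℤ) * (-1) ^ ((a + b + 1) * (d / k)) *
          symmBinom (k : ℤ) ((a + b) * (d / k)) (a * (d / k)))
      = qint 1 ^ 2 * (T (((a*b*d^2 : ℕ)):ℤ) * ∑ k ∈ d.divisors,
        ((moebius k : ℤ) : LaurentPolynomial ℤ) * (-1) ^ ((a + b + 1) * (d / k)) *
          symmBinom (k : ℤ) ((a + b) * (d / k)) (a * (d / k))) := by ring
    _ = qint 1 ^ 2 * Polynomial.aeval (T 2 : LaurentPolynomial ℤ) (Sq a b d) := by rw [hS]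
    _ = T (-2) * Polynomial.aeval (T 2 : LaurentPolynomial ℤ)
          (((X:Polynomial ℤ) - 1)^2 * Sq a b d) := by rw [hq2, map_mul]; ring
    _ = T (-2) * (Polynomial.aeval (T 2 : LaurentPolynomial ℤ)
          (((X:Polynomial ℤ)^d - 1) * (X^((a+b)*d) - 1)) *
            Polynomial.aeval (T 2 : LaurentPolynomial ℤ) R) := by rw [hR, map_mul]
    _ = T (((a*b*d^2 : ℕ)):ℤ) * (qint (d:ℤ) * qint (((a+b)*d : ℕ):ℤ) *
          (T ((d:ℤ) + (((a+b)*d : ℕ):ℤ) - 2 - ((a*b*d^2 : ℕ):ℤ)) *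
            Polynomial.aeval (T 2 : LaurentPolynomial ℤ) R)) := by
        rw [hq1]
        linear_combination (Polynomial.aeval (T 2 : LaurentPolynomial ℤ)
          (((X:Polynomial ℤ)^d - 1) * (X^((a+b)*d) - 1)) *
            Polynomial.aeval (T 2 : LaurentPolynomial ℤ) R) * hT3.symm
end BPS

theorem bps_integrality_P1ab (a b d : ℕ) (ha : 0 < a) (hb : 0 < b)
    (hab : Nat.Coprime a b) (hd : 1 ≤ d) :
    qint (d : ℤ) * qint (((a + b) * d : ℕ) : ℤ) ∣
      qint 1 ^ 2 *
        ∑ k ∈ d.divisors,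
          ((moebius k : ℤ) : LaurentPolynomial ℤ) *
            (-1) ^ ((a + b + 1) * (d / k)) *
            symmBinom (k : ℤ) ((a + b) * (d / k)) (a * (d / k)) :=
  BPS.bps_main a b d ha hb hab hd
end
end

section
/- Let a and b be coprime positive integers and let d ≥ 1 be an integer. Then d²(a+b) divides Σ_{k∣d} μ(k)·(−1)^{(a+b+1)d/k} · C((a+b)d/k, ad/k) in ℤ, where C(n,m) denotes the ordinary binomial coefficient. (This is the genus-zero, q → 1 specialisation of Theorem 2.3 for ℙ(1,a,b): the Klemm–Pandharipande-type BPS number Ω_d(ℙ(1,a,b)) = (1/(d²(a+b))) Σ_{k∣d} μ(k)(−1)^{(a+b+1)d/k} C((a+b)d/k, ad/k) is an integer.) -/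
/-!
STATEMENT 1: genus-zero BPS integrality for ℙ(1,a,b):
d²(a+b) divides Σ_{k∣d} μ(k)·(−1)^{(a+b+1)d/k} · C((a+b)d/k, ad/k) in ℤ.
-/

open Finset ArithmeticFunction

/-- product of integers in (0, p*M] not divisible by p -/
def bpsP (p M : ℕ) : ℕ := ∏ j ∈ (Finset.Ioc 0 (p*M)).filter (fun j => ¬ p ∣ j), j

lemma bpsP_pos {p M : ℕ} (hp : 0 < p) : 0 < bpsP p M := by
  apply Finset.prod_pos
  intro i hi
  simp only [Finset.mem_filter, Finset.mem_Ioc] at hi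
  exact hi.1.1

lemma prod_Ioc_zero_eq_factorial (n : ℕ) : (∏ j ∈ Finset.Ioc 0 n, j) = Nat.factorial n := by
  induction n with
  | zero => simp
  | succ n ih => rw [Finset.prod_Ioc_succ_top (Nat.zero_le _), ih, Nat.factorial_succ, mul_comm]

lemma bpsP_not_dvd {p M : ℕ} (hp : p.Prime) : ¬ p ∣ bpsP p M := by
  rw [bpsP, Prime.dvd_finset_prod_iff hp.prime _]
  rintro ⟨i, hi, hdvd⟩
  simp only [Finset.mem_filter] at hi
  exact hi.2 hdvd

lemma bps_fac (p : ℕ) (hp : 0 < p) : ∀ M, Nat.factorial (p*M) = p^M * Nat.factorial M * bpsP p M := by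
  intro M
  induction M with
  | zero => simp [bpsP]
  | succ M ih =>
    have h1 : p * (M+1) = p*M + p := by ring
    have h2 : (p*M) ≤ p*M + p := by omega
    -- (p*M+p)! = (p*M)! * ∏_{Ioc (p*M) (p*M+p)} j
    have h3 : (∏ j ∈ Finset.Ioc 0 (p*M), j) * ∏ j ∈ Finset.Ioc (p*M) (p*M+p), j
        = ∏ j ∈ Finset.Ioc 0 (p*M+p), j :=
      Finset.prod_Ioc_consecutive _ (Nat.zero_le _) h2
    -- split the block into the multiple of p and the rest
    have h4 : (Finset.Ioc (p*M) (p*M+p)).filter (fun j => p ∣ j) = {p*M + p} := by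
      ext j
      simp only [Finset.mem_filter, Finset.mem_Ioc, Finset.mem_singleton]
      constructor
      · rintro ⟨⟨hj1, hj2⟩, t, rfl⟩
        have : t = M + 1 := by
          rcases Nat.lt_or_ge t (M+1) with h | h
          · exfalso; have := Nat.mul_le_mul_left p (show t ≤ M by omega); omega
          · rcases Nat.lt_or_ge (M+1) t with h' | h'
            · exfalso; have := Nat.mul_le_mul_left p (show M+2 ≤ t by omega); nlinarith
            · omega
        subst this; ring
      · rintro rfl
        exact ⟨⟨by omega, le_refl _⟩, M+1, by ring⟩
    have h5 : (∏ j ∈ Finset.Ioc (p*M) (p*M+p), j)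
        = (p*M+p) * ∏ j ∈ (Finset.Ioc (p*M) (p*M+p)).filter (fun j => ¬ p ∣ j), j := by
      rw [← Finset.prod_filter_mul_prod_filter_not (Finset.Ioc (p*M) (p*M+p)) (fun j => p ∣ j), h4]
      simp
    have h6 : bpsP p (M+1) = bpsP p M * ∏ j ∈ (Finset.Ioc (p*M) (p*M+p)).filter (fun j => ¬ p ∣ j), j := by
      rw [bpsP, bpsP, ← Finset.prod_union]
      · congr 1
        rw [← Finset.filter_union]
        congr 1
        rw [Finset.Ioc_union_Ioc_eq_Ioc (Nat.zero_le _) h2, h1]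
      · apply Finset.disjoint_filter_filter
        rw [Finset.disjoint_left]
        intro j hj1 hj2
        simp only [Finset.mem_Ioc] at hj1 hj2
        omega
    have h7 : Nat.factorial (p*(M+1)) = Nat.factorial (p*M) * ∏ j ∈ Finset.Ioc (p*M) (p*M+p), j := by
      rw [h1, ← prod_Ioc_zero_eq_factorial, ← prod_Ioc_zero_eq_factorial, h3]
    rw [h7, h5, ih, h6, Nat.factorial_succ]
    ring

lemma bps_II (p n k l : ℕ) (hp : 0 < p) (h : k + l = n) :
    Nat.choose (p*n) (p*k) * (bpsP p k * bpsP p l) = Nat.choose n k * bpsP p n := by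
  have hk : k ≤ n := by omega
  have hpk : p*k ≤ p*n := Nat.mul_le_mul_left p hk
  have e1 : Nat.choose n k * Nat.factorial k * Nat.factorial l = Nat.factorial n := by
    have := Nat.choose_mul_factorial_mul_factorial hk
    rwa [show n - k = l by omega] at this
  have e2 : Nat.choose (p*n) (p*k) * Nat.factorial (p*k) * Nat.factorial (p*l) = Nat.factorial (p*n) := by
    have := Nat.choose_mul_factorial_mul_factorial hpk
    rwa [show p*n - p*k = p*l by rw [← h, Nat.mul_add, Nat.add_sub_cancel_left]] at this
  rw [bps_fac p hp k, bps_fac p hp l, bps_fac p hp n, ← e1] at e2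
  apply Nat.eq_of_mul_eq_mul_left (show 0 < p^n * Nat.factorial k * Nat.factorial l by
    positivity)
  calc p ^ n * Nat.factorial k * Nat.factorial l * (Nat.choose (p*n) (p*k) * (bpsP p k * bpsP p l))
      = Nat.choose (p*n) (p*k) * (p ^ k * Nat.factorial k * bpsP p k) *
        (p ^ l * Nat.factorial l * bpsP p l) := by rw [show p^n = p^k*p^l by rw [← pow_add, h]]; ring
    _ = p ^ n * Nat.factorial k * Nat.factorial l * (Nat.choose n k * bpsP p n) := by
        rw [e2]; ring

lemma bps_prod_split {R : Type*} [CommMonoid R] (n : ℕ) (s : Finset ℕ)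
    (hsym : ∀ j ∈ s, 0 < j ∧ j < n ∧ n - j ∈ s ∧ 2*j ≠ n) (F : ℕ → R) :
    ∏ j ∈ s, F j = ∏ j ∈ s.filter (fun j => 2*j < n), (F j * F (n - j)) := by
  have himg : s.filter (fun j => n < 2*j) = (s.filter (fun j => 2*j < n)).image (fun j => n - j) := by
    ext a
    simp only [Finset.mem_filter, Finset.mem_image]
    constructor
    · rintro ⟨ha, ha2⟩
      obtain ⟨h1, h2, h3, h4⟩ := hsym a ha
      exact ⟨n - a, ⟨h3, by omega⟩, by omega⟩
    · rintro ⟨j, ⟨hj, hj2⟩, rfl⟩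
      obtain ⟨h1, h2, h3, h4⟩ := hsym j hj
      exact ⟨h3, by omega⟩
  have hdisj : Disjoint (s.filter (fun j => 2*j < n)) (s.filter (fun j => n < 2*j)) := by
    apply Finset.disjoint_filter_filter'
    rw [disjoint_iff]
    ext j; simp [Pi.inf_apply]; omega
  have hunion : s = (s.filter (fun j => 2*j < n)) ∪ (s.filter (fun j => n < 2*j)) := by
    rw [← Finset.filter_or]
    ext j
    simp only [Finset.mem_filter]
    exact ⟨fun hj => ⟨hj, by have := (hsym j hj).2.2.2; omega⟩, fun hj => hj.1⟩
  conv_lhs => rw [hunion]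
  rw [Finset.prod_union hdisj, himg, Finset.prod_image, ← Finset.prod_mul_distrib]
  intro a ha b hb hab
  simp only [Finset.mem_coe, Finset.mem_filter] at ha hb
  have := (hsym a ha.1).2.1
  have := (hsym b hb.1).2.1
  simp only at hab
  omega

lemma bps_prod_sym_pair {R : Type*} [CommMonoid R] (n : ℕ) (s : Finset ℕ) (f g : ℕ → R)
    (hsym : ∀ j ∈ s, 0 < j ∧ j < n ∧ n - j ∈ s ∧ 2*j ≠ n)
    (hfg : ∀ j ∈ s, 2*j < n → f j * f (n - j) = g j * g (n - j)) :
    ∏ j ∈ s, f j = ∏ j ∈ s, g j := by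
  rw [bps_prod_split n s hsym f, bps_prod_split n s hsym g]
  apply Finset.prod_congr rfl
  intro j hj
  simp only [Finset.mem_filter] at hj
  exact hfg j hj.1 hj.2

lemma bpsP_add (p x y : ℕ) :
    bpsP p (x+y) = bpsP p x * ∏ j ∈ (Finset.Ioc 0 (p*y)).filter (fun j => ¬ p ∣ j), (p*x + j) := by
  have himg : (Finset.Ioc (p*x) (p*x + p*y)).filter (fun j => ¬ p ∣ j)
      = ((Finset.Ioc 0 (p*y)).filter (fun j => ¬ p ∣ j)).image (fun j => p*x + j) := by
    ext a
    simp only [Finset.mem_filter, Finset.mem_Ioc, Finset.mem_image]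
    constructor
    · rintro ⟨⟨h1, h2⟩, h3⟩
      refine ⟨a - p*x, ⟨⟨by omega, by omega⟩, fun hdvd => h3 ?_⟩, by omega⟩
      have : a = p*x + (a - p*x) := by omega
      rw [this]
      exact Dvd.dvd.add (Dvd.intro x rfl) hdvd
    · rintro ⟨j, ⟨⟨h1, h2⟩, h3⟩, rfl⟩
      refine ⟨⟨by omega, by omega⟩, fun hdvd => h3 ?_⟩
      exact (Nat.dvd_add_right (Dvd.intro x rfl)).mp hdvd
  have hsplit : bpsP p (x+y) = bpsP p x * ∏ j ∈ (Finset.Ioc (p*x) (p*x + p*y)).filter (fun j => ¬ p ∣ j), j := by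
    rw [bpsP, bpsP, ← Finset.prod_union]
    · congr 1
      rw [← Finset.filter_union]
      congr 1
      rw [Finset.Ioc_union_Ioc_eq_Ioc (Nat.zero_le _) (by omega)]
      congr 1
      ring
    · apply Finset.disjoint_filter_filter
      rw [Finset.disjoint_left]
      intro j hj1 hj2
      simp only [Finset.mem_Ioc] at hj1 hj2
      omega
  rw [hsplit, himg, Finset.prod_image]
  intro a _ b _ hab
  simp only at hab
  omega

lemma bps_S_sym (p y : ℕ) (hp : p.Prime) (h : ¬ p ∣ 2 ∨ 2 ∣ y) :
    ∀ j ∈ (Finset.Ioc 0 (p*y)).filter (fun j => ¬ p ∣ j),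
      0 < j ∧ j < p*y ∧ p*y - j ∈ (Finset.Ioc 0 (p*y)).filter (fun j => ¬ p ∣ j) ∧ 2*j ≠ p*y := by
  intro j hj
  simp only [Finset.mem_filter, Finset.mem_Ioc] at hj ⊢
  obtain ⟨⟨h1, h2⟩, h3⟩ := hj
  have hjlt : j < p*y := by
    rcases Nat.lt_or_ge j (p*y) with h' | h'
    · exact h'
    · exact (h3 (show p ∣ j from (by omega : j = p*y) ▸ Dvd.intro y rfl)).elim
  have hne : 2*j ≠ p*y := by
    intro heq
    rcases h with hodd | heven
    · have : p ∣ 2*j := heq ▸ Dvd.intro y rfl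
      rcases (Nat.Prime.dvd_mul hp).mp this with h' | h'
      · exact hodd h'
      · exact h3 h'
    · obtain ⟨t, rfl⟩ := heven
      rw [show p*(2*t) = 2*(p*t) by ring] at heq
      have : j = p*t := by omega
      exact h3 (this ▸ Dvd.intro t rfl)
  refine ⟨h1, hjlt, ⟨⟨by omega, by omega⟩, fun hdvd => h3 ?_⟩, hne⟩
  have : j = p*y - (p*y - j) := by omega
  rw [this]
  exact Nat.dvd_sub (Dvd.intro y rfl) hdvd

lemma bps_key₁ (p x y : ℕ) (hp : p.Prime) (h : ¬ p ∣ 2 ∨ 2 ∣ y) :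
    ((p^2*x*(x+y) : ℕ) : ℤ) ∣ (bpsP p x : ℤ) * bpsP p y - bpsP p (x+y) := by
  set c := p^2*x*(x+y) with hc
  set S := (Finset.Ioc 0 (p*y)).filter (fun j => ¬ p ∣ j) with hS
  have hzero : ((p:ZMod c))^2 * (x:ZMod c) * ((x:ZMod c)+(y:ZMod c)) = 0 := by
    have := ZMod.natCast_self c
    rw [hc] at this
    push_cast at this
    exact this
  have hpair : ∀ j ∈ S, 2*j < p*y →
      ((p*x + j : ℕ) : ZMod c) * ((p*x + (p*y - j) : ℕ) : ZMod c)
        = ((j : ℕ) : ZMod c) * (((p*y - j) : ℕ) : ZMod c) := by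
    intro j hj hlt
    obtain ⟨h1, h2, _, _⟩ := bps_S_sym p y hp h j hj
    have hle : j ≤ p*y := le_of_lt h2
    push_cast [Nat.cast_sub hle]
    linear_combination hzero
  have hprod : ∏ j ∈ S, ((p*x + j : ℕ) : ZMod c) = ∏ j ∈ S, ((j : ℕ) : ZMod c) :=
    bps_prod_sym_pair (p*y) S _ _ (bps_S_sym p y hp h) hpair
  have key : ((bpsP p x * bpsP p y : ℕ) : ZMod c) = ((bpsP p (x+y) : ℕ) : ZMod c) := by
    rw [bpsP_add p x y, ← hS, Nat.cast_mul, Nat.cast_mul]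
    congr 1
    rw [show ((bpsP p y : ℕ) : ZMod c) = ∏ j ∈ S, ((j : ℕ) : ZMod c) by rw [bpsP, ← hS]; push_cast; rfl]
    rw [← hprod]
    push_cast
    rfl
  have h2 := (ZMod.natCast_eq_natCast_iff _ _ _).mp key.symm
  have h3 := h2.dvd
  exact_mod_cast h3

lemma bps_key₂ (x y : ℕ) (hy : ¬ 2 ∣ y) :
    ((4*x*(x+y) : ℕ) : ℤ) ∣ ((2*x+y) * (bpsP 2 x * bpsP 2 y) : ℕ) - ((y * bpsP 2 (x+y) : ℕ) : ℤ) := by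
  set c := 4*x*(x+y) with hc
  set S := (Finset.Ioc 0 (2*y)).filter (fun j => ¬ 2 ∣ j) with hS
  have hy1 : 0 < y := by omega
  have hyS : y ∈ S := by
    simp only [hS, Finset.mem_filter, Finset.mem_Ioc]
    exact ⟨⟨hy1, by omega⟩, hy⟩
  set S' := S.erase y with hS'
  have hzero : ((4 : ZMod c)) * (x : ZMod c) * ((x : ZMod c)+(y : ZMod c)) = 0 := by
    have := ZMod.natCast_self c
    rw [hc] at this
    push_cast at this
    exact this
  have hmem : ∀ j ∈ S', 0 < j ∧ j < 2*y ∧ 2*y - j ∈ S' ∧ 2*j ≠ 2*y := by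
    intro j hj
    simp only [hS', hS, Finset.mem_erase, Finset.mem_filter, Finset.mem_Ioc] at hj ⊢
    obtain ⟨hne, ⟨h1, h2⟩, h3⟩ := hj
    have hjlt : j < 2*y := by
      rcases Nat.lt_or_ge j (2*y) with h' | h'
      · exact h'
      · exact (h3 (show 2 ∣ j by omega)).elim
    refine ⟨h1, hjlt, ⟨by omega, ⟨by omega, by omega⟩, by omega⟩, by omega⟩
  have hpair : ∀ j ∈ S', 2*j < 2*y →
      ((2*x + j : ℕ) : ZMod c) * ((2*x + (2*y - j) : ℕ) : ZMod c)
        = ((j : ℕ) : ZMod c) * (((2*y - j) : ℕ) : ZMod c) := by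
    intro j hj hlt
    have hle : j ≤ 2*y := by omega
    push_cast [Nat.cast_sub hle]
    linear_combination hzero
  have hprod : ∏ j ∈ S', ((2*x + j : ℕ) : ZMod c) = ∏ j ∈ S', ((j : ℕ) : ZMod c) :=
    bps_prod_sym_pair (2*y) S' _ _ hmem hpair
  have hPy : ((bpsP 2 y : ℕ) : ZMod c) = (y : ZMod c) * ∏ j ∈ S', ((j : ℕ) : ZMod c) := by
    rw [show ((bpsP 2 y : ℕ) : ZMod c) = ∏ j ∈ S, ((j : ℕ) : ZMod c) by rw [bpsP, ← hS]; push_cast; rfl]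
    rw [← Finset.mul_prod_erase S _ hyS, ← hS']
  have hPxy : ((bpsP 2 (x+y) : ℕ) : ZMod c)
      = ((bpsP 2 x : ℕ) : ZMod c) * (((2*x + y : ℕ) : ZMod c) * ∏ j ∈ S', ((2*x + j : ℕ) : ZMod c)) := by
    rw [bpsP_add 2 x y, ← hS, Nat.cast_mul]
    congr 1
    rw [show ((∏ j ∈ S, (2*x + j) : ℕ) : ZMod c) = ∏ j ∈ S, ((2*x + j : ℕ) : ZMod c) by push_cast; rfl]
    rw [← Finset.mul_prod_erase S _ hyS, ← hS']
  have key : (((2*x+y) * (bpsP 2 x * bpsP 2 y) : ℕ) : ZMod c) = ((y * bpsP 2 (x+y) : ℕ) : ZMod c) := by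
    rw [Nat.cast_mul, Nat.cast_mul, Nat.cast_mul, hPy, hPxy, hprod]
    push_cast
    ring
  have h2 := (ZMod.natCast_eq_natCast_iff _ _ _).mp key.symm
  exact_mod_cast h2.dvd

lemma bps_id (n k : ℕ) (hk : 0 < k) (hn : k ≤ n) :
    Nat.choose n k * k = n * Nat.choose (n-1) (k-1) := by
  have := Nat.add_one_mul_choose_eq (n-1) (k-1)
  rw [show n-1+1 = n by omega, show k-1+1 = k by omega] at this
  omega

lemma bps_choose_even {n k : ℕ} (hn : 2 ∣ n) (hk : ¬ 2 ∣ k) (hkn : k ≤ n) :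
    2 ∣ Nat.choose n k := by
  have h := bps_id n k (by omega) hkn
  have h2 : 2 ∣ Nat.choose n k * k := by
    rw [h]; exact Dvd.dvd.mul_right hn _
  rcases (Nat.Prime.dvd_mul Nat.prime_two).mp h2 with h' | h'
  · exact h'
  · exact (hk h').elim

lemma bps_A (a b m : ℕ) (ha : 0 < a) (hb : 0 < b) (hm : 0 < m) (hab : Nat.Coprime a b) :
    (a + b) ∣ Nat.choose ((a+b)*m) (a*m) := by
  set n := (a+b)*m with hn
  have ham : a*m ≤ n := by rw [hn]; exact Nat.mul_le_mul_right m (by omega)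
  have hbm : b*m ≤ n := by rw [hn]; exact Nat.mul_le_mul_right m (by omega)
  have h1 : n ∣ a*m*Nat.choose n (a*m) := by
    have h := bps_id n (a*m) (by positivity) ham
    exact ⟨Nat.choose (n-1) (a*m-1), by rw [show a*m*Nat.choose n (a*m) = Nat.choose n (a*m) * (a*m) by ring, h]⟩
  have h2 : n ∣ b*m*Nat.choose n (a*m) := by
    have hsymm : Nat.choose n (b*m) = Nat.choose n (a*m) := by
      rw [← Nat.choose_symm ham]
      congr 1
      rw [hn, Nat.add_mul]
      omega
    have h := bps_id n (b*m) (by positivity) hbm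
    rw [hsymm] at h
    exact ⟨Nat.choose (n-1) (b*m-1), by rw [show b*m*Nat.choose n (a*m) = Nat.choose n (a*m) * (b*m) by ring, h]⟩
  have h3 : n ∣ m*Nat.choose n (a*m) := by
    have h := Nat.dvd_gcd h1 h2
    rwa [show a*m*Nat.choose n (a*m) = a*(m*Nat.choose n (a*m)) by ring,
      show b*m*Nat.choose n (a*m) = b*(m*Nat.choose n (a*m)) by ring,
      Nat.gcd_mul_right, hab, one_mul] at h
  apply (Nat.mul_dvd_mul_iff_left hm).mp
  rw [show m*(a+b) = (a+b)*m by ring, ← hn]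
  exact h3

lemma bps_cancel (p T : ℕ) (hp : p.Prime) (u v : ℕ) (hu : ¬ p ∣ u) (hv : ¬ p ∣ v)
    (z : ℤ) (h : (p:ℤ)^T ∣ z * ((u * v : ℕ) : ℤ)) : (p:ℤ)^T ∣ z := by
  have hcop : IsCoprime ((p:ℤ)^T) ((u*v : ℕ) : ℤ) := by
    apply IsCoprime.pow_left
    exact Nat.isCoprime_iff_coprime.mpr
      (Nat.Coprime.mul_right ((Nat.Prime.coprime_iff_not_dvd hp).mpr hu)
        ((Nat.Prime.coprime_iff_not_dvd hp).mpr hv))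
  exact hcop.dvd_of_dvd_mul_right h

lemma bps_core₁ (p x y T : ℕ) (hp : p.Prime) (hor : ¬ p ∣ 2 ∨ 2 ∣ y)
    (hT : p^T ∣ p^2*x*(x+y)) :
    ((p:ℤ))^T ∣ (Nat.choose (p*(x+y)) (p*x) : ℤ) - (Nat.choose (x+y) x : ℤ) := by
  have hid := bps_II p (x+y) x y hp.pos rfl
  have hkey := bps_key₁ p x y hp hor
  have hΔ : ((p:ℤ))^T ∣ (bpsP p x : ℤ) * bpsP p y - bpsP p (x+y) :=
    dvd_trans (show ((p:ℤ))^T ∣ ((p^2*x*(x+y) : ℕ) : ℤ) by exact_mod_cast hT) hkey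
  apply bps_cancel p T hp (bpsP p x) (bpsP p y) (bpsP_not_dvd hp) (bpsP_not_dvd hp)
  have hidz : (Nat.choose (p*(x+y)) (p*x) : ℤ) * ((bpsP p x * bpsP p y : ℕ) : ℤ)
      = (Nat.choose (x+y) x : ℤ) * (bpsP p (x+y) : ℤ) := by exact_mod_cast hid
  have : ((Nat.choose (p*(x+y)) (p*x) : ℤ) - (Nat.choose (x+y) x : ℤ)) * ((bpsP p x * bpsP p y : ℕ) : ℤ)
      = - (Nat.choose (x+y) x : ℤ) * ((bpsP p x : ℤ) * bpsP p y - bpsP p (x+y)) := by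
    rw [sub_mul, hidz]
    push_cast
    ring
  rw [this]
  exact Dvd.dvd.mul_left hΔ _

lemma bps_core₂ (x y T s : ℕ) (hx : ¬ 2 ∣ x) (hy : ¬ 2 ∣ y) (hs : 2^s ∣ x + y)
    (hT : T ≤ 2 + s) :
    ((2:ℤ))^T ∣ (Nat.choose (2*(x+y)) (2*x) : ℤ) + (Nat.choose (x+y) x : ℤ) := by
  have hid := bps_II 2 (x+y) x y (by norm_num) rfl
  have hkey := bps_key₂ x y hy
  set X := Nat.choose (2*(x+y)) (2*x) with hX
  set Y := Nat.choose (x+y) x with hY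
  have hYeven : 2 ∣ Y := by
    apply bps_choose_even
    · omega
    · exact hx
    · omega
  have hmod : (2:ℤ)^(2+s) ∣ ((4*x*(x+y) : ℕ) : ℤ) := by
    have : 2^(2+s) ∣ 4*x*(x+y) := by
      rw [pow_add]
      apply mul_dvd_mul
      · exact Dvd.dvd.mul_right (by norm_num) x
      · exact hs
    exact_mod_cast this
  have hΔ : (2:ℤ)^(2+s) ∣ ((2*x+y) * (bpsP 2 x * bpsP 2 y) : ℕ) - ((y * bpsP 2 (x+y) : ℕ) : ℤ) :=
    dvd_trans hmod hkey
  apply dvd_trans (pow_dvd_pow (2:ℤ) hT)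
  apply bps_cancel 2 (2+s) Nat.prime_two (bpsP 2 x) (bpsP 2 y)
    (bpsP_not_dvd Nat.prime_two) (bpsP_not_dvd Nat.prime_two)
  -- cancel the odd factor y as well
  apply bps_cancel 2 (2+s) Nat.prime_two y 1 hy (by norm_num)
  have hidz : (X : ℤ) * ((bpsP 2 x * bpsP 2 y : ℕ) : ℤ) = (Y : ℤ) * (bpsP 2 (x+y) : ℤ) := by
    exact_mod_cast hid
  have hexp : ((X : ℤ) + (Y:ℤ)) * ((bpsP 2 x * bpsP 2 y : ℕ) : ℤ) * ((y*1 : ℕ) : ℤ)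
      = (2*((x:ℤ)+(y:ℤ))) * (Y:ℤ) * ((bpsP 2 x * bpsP 2 y : ℕ) : ℤ)
        - (Y:ℤ) * (((2*x+y) * (bpsP 2 x * bpsP 2 y) : ℕ) - ((y * bpsP 2 (x+y) : ℕ) : ℤ)) := by
    have hidz2 : (X : ℤ) * ((bpsP 2 x : ℤ) * (bpsP 2 y : ℤ)) = (Y : ℤ) * (bpsP 2 (x+y) : ℤ) := by
      exact_mod_cast hid
    push_cast
    linear_combination (y : ℤ) * hidz2
  rw [hexp]
  apply dvd_sub
  · have h1 : (2:ℤ)^(2+s) ∣ (2*((x:ℤ)+(y:ℤ))) * (Y:ℤ) := by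
      have hxy : (2:ℤ)^(1+s) ∣ 2*((x:ℤ)+(y:ℤ)) := by
        rw [pow_add, pow_one]
        apply mul_dvd_mul dvd_rfl
        exact_mod_cast hs
      have hyy : (2:ℤ)^1 ∣ (Y:ℤ) := by exact_mod_cast hYeven
      have := mul_dvd_mul hxy hyy
      rwa [← pow_add, show 1+s+1 = 2+s by omega] at this
    exact h1.mul_right _
  · exact Dvd.dvd.mul_left hΔ _

lemma bps_B (p a b m c s : ℕ) (hp : p.Prime) (ha : 0 < a) (hb : 0 < b) (hm : 0 < m)
    (hab : Nat.Coprime a b) (hc : p^c ∣ m) (hs : p^s ∣ a + b) :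
    ((p:ℤ))^(2+2*c+s) ∣
      (-1)^((a+b+1)*(p*m)) * (Nat.choose ((a+b)*(p*m)) (a*(p*m)) : ℤ)
      - (-1)^((a+b+1)*m) * (Nat.choose ((a+b)*m) (a*m) : ℤ) := by
  set x := a*m with hx
  set y := b*m with hy
  have hgx : a*(p*m) = p*x := by rw [hx]; ring
  have hgn : (a+b)*(p*m) = p*(x+y) := by rw [hx, hy]; ring
  have hgn2 : (a+b)*m = x+y := by rw [hx, hy]; ring
  rw [hgx, hgn, hgn2]
  have hxpos : 0 < x := by positivity
  have hypos : 0 < y := by positivity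
  have hTdvd : p^(2+2*c+s) ∣ p^2*x*(x+y) := by
    have h1 : p^c ∣ x := hx ▸ Dvd.dvd.mul_left hc a
    have h2 : p^(s+c) ∣ x+y := by
      rw [← hgn2, pow_add]
      exact mul_dvd_mul hs hc
    have := mul_dvd_mul (mul_dvd_mul (dvd_refl (p^2)) h1) h2
    rwa [← pow_add, ← pow_add, show 2+c+(s+c) = 2+2*c+s by omega] at this
  rcases Nat.Prime.eq_two_or_odd' hp with hp2 | hpodd
  case inr =>
    -- p odd
    have hsign : (-1:ℤ)^((a+b+1)*(p*m)) = (-1:ℤ)^((a+b+1)*m) := by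
      rcases Nat.even_or_odd ((a+b+1)*m) with he | ho
      · rw [Even.neg_one_pow he, Even.neg_one_pow (by
          rw [show (a+b+1)*(p*m) = ((a+b+1)*m)*p by ring]
          exact he.mul_right p)]
      · rw [Odd.neg_one_pow ho, Odd.neg_one_pow (by
          rw [show (a+b+1)*(p*m) = ((a+b+1)*m)*p by ring]
          exact ho.mul hpodd)]
    rw [hsign, show (-1:ℤ)^((a+b+1)*m) * (Nat.choose (p*(x+y)) (p*x) : ℤ)
        - (-1:ℤ)^((a+b+1)*m) * (Nat.choose (x+y) x : ℤ)
        = (-1:ℤ)^((a+b+1)*m) * ((Nat.choose (p*(x+y)) (p*x) : ℤ) - (Nat.choose (x+y) x : ℤ)) by ring]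
    have hor : ¬ p ∣ 2 ∨ 2 ∣ y := Or.inl (fun hdvd => by
      have h2 := (Nat.prime_dvd_prime_iff_eq hp Nat.prime_two).mp hdvd
      subst h2
      simp [Nat.odd_iff] at hpodd)
    exact (bps_core₁ p x y _ hp hor hTdvd).mul_left _
  case inl =>
    subst hp2
    have hsign1 : (-1:ℤ)^((a+b+1)*(2*m)) = 1 :=
      Even.neg_one_pow (by rw [show (a+b+1)*(2*m) = 2*((a+b+1)*m) by ring]; exact even_two_mul _)
    rw [hsign1, one_mul]
    by_cases hym : 2 ∣ y
    · -- y even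
      have hsign2 : (-1:ℤ)^((a+b+1)*m) = 1 := by
        apply Even.neg_one_pow
        rw [Nat.even_mul]
        rcases (Nat.prime_two.dvd_mul.mp (hy ▸ hym)) with hbb | hmm
        · left
          have hna : ¬ 2 ∣ a := fun haa => by
            have hg : (2:ℕ) ∣ Nat.gcd a b := Nat.dvd_gcd haa hbb
            have h1 : Nat.gcd a b = 1 := hab
            rw [h1] at hg
            omega
          rw [Nat.even_iff]
          omega
        · right; exact Nat.even_iff.mpr (by omega)
      rw [hsign2, one_mul]
      exact bps_core₁ 2 x y _ Nat.prime_two (Or.inr hym) hTdvd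
    · by_cases hxm : 2 ∣ x
      · -- x even, y odd
        have hnb : ¬ 2 ∣ b := fun hbb => hym (hy ▸ hbb.mul_right m)
        have hnm : ¬ 2 ∣ m := fun hmm => hym (hy ▸ hmm.mul_left b)
        have haa : 2 ∣ a := by
          rcases Nat.prime_two.dvd_mul.mp (hx ▸ hxm) with h' | h'
          · exact h'
          · exact (hnm h').elim
        have hsign2 : (-1:ℤ)^((a+b+1)*m) = 1 := by
          apply Even.neg_one_pow
          rw [Nat.even_mul]
          left
          rw [Nat.even_iff]
          omega
        rw [hsign2, one_mul]
        have hTdvd' : 2^(2+2*c+s) ∣ 2^2*y*(y+x) := by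
          have h1 : 2^c ∣ y := hy ▸ Dvd.dvd.mul_left hc b
          have h2 : 2^(s+c) ∣ y+x := by
            rw [show y+x = x+y by ring, ← hgn2, pow_add]
            exact mul_dvd_mul hs hc
          have := mul_dvd_mul (mul_dvd_mul (dvd_refl ((2:ℕ)^2)) h1) h2
          rwa [← pow_add, ← pow_add, show 2+c+(s+c) = 2+2*c+s by omega] at this
        have hres := bps_core₁ 2 y x (2+2*c+s) Nat.prime_two (Or.inr hxm) hTdvd'
        have hcs1 : Nat.choose (2*(y+x)) (2*y) = Nat.choose (2*(x+y)) (2*x) := by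
          rw [show 2*(y+x) = 2*(x+y) by ring, ← Nat.choose_symm (show 2*x ≤ 2*(x+y) by omega)]
          congr 1
          omega
        have hcs2 : Nat.choose (y+x) y = Nat.choose (x+y) x := by
          rw [show y+x = x+y by ring, ← Nat.choose_symm (show x ≤ x+y by omega)]
          congr 1
          omega
        rw [hcs1, hcs2] at hres
        exact hres
      · -- both odd
        have hc0 : c = 0 := by
          by_contra hc0
          exact hxm (hx ▸ ((dvd_pow_self 2 hc0).trans hc).mul_left a)
        subst hc0
        have hsign2 : (-1:ℤ)^((a+b+1)*m) = -1 := by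
          apply Odd.neg_one_pow
          rw [Nat.odd_mul]
          have hna : ¬ 2 ∣ a := fun h' => hxm (hx ▸ h'.mul_right m)
          have hnb : ¬ 2 ∣ b := fun h' => hym (hy ▸ h'.mul_right m)
          have hnm : ¬ 2 ∣ m := fun h' => hxm (hx ▸ h'.mul_left a)
          constructor <;> rw [Nat.odd_iff] <;> omega
        rw [hsign2]
        have hs' : 2^s ∣ x + y := by rw [← hgn2]; exact hs.mul_right m
        have hna : ¬ 2 ∣ x := hxm
        have := bps_core₂ x y (2+2*0+s) s hna hym hs' (by omega)
        rw [show (Nat.choose (2*(x+y)) (2*x) : ℤ) - (-1) * (Nat.choose (x+y) x : ℤ)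
          = (Nat.choose (2*(x+y)) (2*x) : ℤ) + (Nat.choose (x+y) x : ℤ) by ring]
        exact this


theorem bps_integrality_P1ab_genus_zero (a b d : ℕ) (ha : 0 < a) (hb : 0 < b)
    (hab : Nat.Coprime a b) (hd : 1 ≤ d) :
    ((d ^ 2 * (a + b) : ℕ) : ℤ) ∣
      ∑ k ∈ d.divisors,
        (moebius k : ℤ) * (-1) ^ ((a + b + 1) * (d / k)) *
          (((a + b) * (d / k)).choose (a * (d / k)) : ℤ) := by
  set F : ℕ → ℤ := fun k => (moebius k : ℤ) * (-1) ^ ((a + b + 1) * (d / k)) *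
          (((a + b) * (d / k)).choose (a * (d / k)) : ℤ) with hF
  set D := d^2*(a+b) with hD
  have hN0 : 0 < a + b := by omega
  have hD0 : D ≠ 0 := by positivity
  -- reduce to prime powers
  have hfact : ((D.factorization.prod fun p k => p^k : ℕ) : ℤ) = (D : ℤ) := by
    rw [Nat.factorization_prod_pow_eq_self hD0]
  rw [← hfact, Finsupp.prod]
  push_cast
  apply Finset.prod_dvd_of_coprime
  · -- pairwise coprime
    intro p hp q hq hpq
    simp only [Function.onFun]
    apply IsCoprime.pow
    rw [Nat.isCoprime_iff_coprime]
    exact (Nat.coprime_primes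
      (Nat.prime_of_mem_primeFactors (by rwa [← Nat.support_factorization]))
      (Nat.prime_of_mem_primeFactors (by rwa [← Nat.support_factorization]))).mpr hpq
  intro p hpmem
  have hp : p.Prime := Nat.prime_of_mem_primeFactors (by rwa [← Nat.support_factorization])
  have hval : D.factorization p = 2 * d.factorization p + (a+b).factorization p := by
    rw [hD, Nat.factorization_mul (by positivity) (by omega), Finsupp.add_apply,
      Nat.factorization_pow, Finsupp.smul_apply, smul_eq_mul]
  rw [hval]
  set e := d.factorization p with he
  set s := (a+b).factorization p with hs
  have hsdvd : p^s ∣ a + b := Nat.ordProj_dvd _ _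
  by_cases he0 : e = 0
  · -- p does not contribute to d: use a+b ∣ choose
    rw [he0]
    apply Finset.dvd_sum
    intro k hk
    have hkd : k ∣ d := (Nat.mem_divisors.mp hk).1
    have hm : 0 < d / k := Nat.div_pos (Nat.le_of_dvd (by omega) hkd)
      (Nat.pos_of_mem_divisors hk)
    have hchoose : (a+b) ∣ (((a + b) * (d / k)).choose (a * (d / k))) :=
      bps_A a b (d/k) ha hb hm hab
    have : (p:ℤ)^s ∣ ((((a + b) * (d / k)).choose (a * (d / k)) : ℕ) : ℤ) := by
      exact_mod_cast (hsdvd.trans hchoose)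
    simpa [hF, mul_assoc] using this.mul_left ((moebius k : ℤ) * (-1) ^ ((a + b + 1) * (d / k)))
  · -- p divides d
    have hepos : 1 ≤ e := by omega
    have hpd : p ∣ d := Nat.dvd_of_factorization_pos (by omega)
    have hped : p^e ∣ d := Nat.ordProj_dvd _ _
    set A := d.divisors.filter (fun k => ¬ p ∣ k) with hA
    have hsplit : ∑ k ∈ d.divisors, F k
        = (∑ k ∈ d.divisors.filter (fun k => p ∣ k), F k) + ∑ k ∈ A, F k :=
      (Finset.sum_filter_add_sum_filter_not d.divisors (fun k => p ∣ k) F).symm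
    have himgsub : A.image (fun k => p*k) ⊆ d.divisors.filter (fun k => p ∣ k) := by
      intro j hj
      obtain ⟨k, hk, rfl⟩ := Finset.mem_image.mp hj
      simp only [hA, Finset.mem_filter, Nat.mem_divisors] at hk ⊢
      exact ⟨⟨(Nat.Coprime.mul_dvd_of_dvd_of_dvd
        ((Nat.Prime.coprime_iff_not_dvd hp).mpr hk.2) hpd hk.1.1), by omega⟩,
        Dvd.intro k rfl⟩
    have hvanish : ∀ j ∈ d.divisors.filter (fun k => p ∣ k),
        j ∉ A.image (fun k => p*k) → F j = 0 := by
      intro j hj hnot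
      simp only [Finset.mem_filter, Nat.mem_divisors] at hj
      obtain ⟨⟨hjd, hd0⟩, hpj⟩ := hj
      by_contra hFne
      have hμ : (moebius j : ℤ) ≠ 0 := by
        intro h0
        apply hFne
        rw [hF]
        simp [h0]
      have hsq : Squarefree j := moebius_ne_zero_iff_squarefree.mp (by exact_mod_cast hμ)
      apply hnot
      obtain ⟨u, rfl⟩ := hpj
      have hpu : ¬ p ∣ u := by
        intro hpu
        have : p * p ∣ p * u := mul_dvd_mul_left p hpu
        exact hp.one_lt.ne' (Nat.isUnit_iff.mp (hsq p this))
      refine Finset.mem_image.mpr ⟨u, ?_, rfl⟩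
      simp only [hA, Finset.mem_filter, Nat.mem_divisors]
      exact ⟨⟨(dvd_mul_left u p).trans hjd, hd0⟩, hpu⟩
    have himg : ∑ k ∈ d.divisors.filter (fun k => p ∣ k), F k
        = ∑ k ∈ A, F (p*k) := by
      rw [← Finset.sum_subset himgsub hvanish]
      exact Finset.sum_image (fun x _ y _ h => by
        exact Nat.eq_of_mul_eq_mul_left hp.pos h)
    rw [hsplit, himg, ← Finset.sum_add_distrib]
    apply Finset.dvd_sum
    intro k hk
    simp only [hA, Finset.mem_filter, Nat.mem_divisors] at hk
    obtain ⟨⟨hkd, hd0⟩, hpk⟩ := hk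
    have hkpos : 0 < k := Nat.pos_of_dvd_of_pos hkd (by omega)
    have hcop : Nat.Coprime p k := (Nat.Prime.coprime_iff_not_dvd hp).mpr hpk
    have hpkd : p * k ∣ d := Nat.Coprime.mul_dvd_of_dvd_of_dvd hcop hpd hkd
    obtain ⟨u, hu⟩ := hpkd
    have hupos : 0 < u := by
      rcases Nat.eq_zero_or_pos u with h0 | h0
      · rw [h0, mul_zero] at hu; omega
      · exact h0
    have hdk : d / k = p * u := by
      rw [hu, show p*k*u = (p*u)*k by ring, Nat.mul_div_cancel _ hkpos]
    have hdpk : d / (p*k) = u := by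
      rw [hu, Nat.mul_div_cancel_left _ (Nat.mul_pos hp.pos hkpos)]
    have huc : p^(e-1) ∣ u := by
      have hpe : p^(e-1)*p = p^e := by rw [← pow_succ, Nat.sub_add_cancel hepos]
      have h1 : p^(e-1)*(p*k) ∣ d := by
        rw [show p^(e-1)*(p*k) = (p^(e-1)*p)*k by ring, hpe]
        exact Nat.Coprime.mul_dvd_of_dvd_of_dvd
          (Nat.Coprime.pow_left _ hcop) hped hkd
      obtain ⟨w, hw⟩ := h1
      rw [hu] at hw
      exact ⟨w, Nat.eq_of_mul_eq_mul_left (Nat.mul_pos hp.pos hkpos)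
        (show (p*k)*u = (p*k)*(p^(e-1)*w) by rw [show (p*k)*u = p*k*u by ring, hw]; ring)⟩
    have hμpk : (moebius (p*k) : ℤ) = -(moebius k : ℤ) := by
      rw [ArithmeticFunction.isMultiplicative_moebius.map_mul_of_coprime hcop,
        ArithmeticFunction.moebius_apply_prime hp]
      push_cast
      ring
    have hB := bps_B p a b u (e-1) s hp ha hb hupos hab huc hsdvd
    rw [show 2+2*(e-1)+s = 2*e+s by omega] at hB
    have hterm : F (p*k) + F k = (moebius k : ℤ) *
        ((-1)^((a+b+1)*(p*u)) * ((((a+b)*(p*u)).choose (a*(p*u)) : ℕ) : ℤ)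
          - (-1)^((a+b+1)*u) * ((((a+b)*u).choose (a*u) : ℕ) : ℤ)) := by
      rw [hF]
      simp only [hdk, hdpk]
      rw [hμpk]
      push_cast
      ring
    rw [hterm]
    exact Dvd.dvd.mul_left hB _
end
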